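/- arXiv:math/0102129 — 4 statements merged into one kernel-verified Lean document; each statement's English description precedes it below -/
import Mathlib

section
/- Let E be a finite-dimensional real normed vector space and let K₁, K₂ ⊆ E be compact convex sets with 0 in their interiors. Define the radial projection φ : E → E by φ(0) = 0 and φ(x) = (μ_{K₁}(x)/μ_{K₂}(x)) · x for x ≠ 0, where μ_K denotes the Minkowski gauge functional of K (μ_K(x) = inf{t > 0 : x ∈ t·K}). Then φ maps K₁ bijectively onto K₂ and is bi-Lipschitz on K₁: there exists C ≥ 1 such that (1/C)‖x − y‖ ≤ ‖φ(x) − φ(y)‖ ≤ C‖x − y‖ for all x, y ∈ K₁. -/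
open Metric Set

/-- Auxiliary lemma: a radial map `x ↦ (gauge K₁ x / gauge K₂ x) • x` is Lipschitz,
provided `K₁, K₂` are convex with `0` in their interiors and `K₂` is bounded. -/
lemma radial_lip_aux {E : Type*} [NormedAddCommGroup E] [NormedSpace ℝ E]
    {K₁ K₂ : Set E} (h₁conv : Convex ℝ K₁) (h₂conv : Convex ℝ K₂)
    (h₁zero : (0 : E) ∈ interior K₁) (h₂zero : (0 : E) ∈ interior K₂)
    (h₂bdd : Bornology.IsBounded K₂)
    (φ : E → E) (hφ0 : φ 0 = 0)
    (hφ : ∀ x : E, x ≠ 0 → φ x = (gauge K₁ x / gauge K₂ x) • x) :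
    ∃ C : ℝ, 0 < C ∧ ∀ x y : E, ‖φ x - φ y‖ ≤ C * ‖x - y‖ := by
  obtain ⟨r₁, hr₁, hball₁⟩ := Metric.mem_nhds_iff.1 (mem_interior_iff_mem_nhds.1 h₁zero)
  obtain ⟨r₂, hr₂, hball₂⟩ := Metric.mem_nhds_iff.1 (mem_interior_iff_mem_nhds.1 h₂zero)
  obtain ⟨R, hR, hKR⟩ := h₂bdd.subset_closedBall_lt 0 0
  have abs₂ : Absorbent ℝ K₂ :=
    absorbent_nhds_zero (mem_interior_iff_mem_nhds.1 h₂zero)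
  set g₁ := gauge K₁ with hg₁def
  set g₂ := gauge K₂ with hg₂def
  have hg₁le : ∀ x : E, g₁ x ≤ ‖x‖ / r₁ := fun x => by
    rw [le_div_iff₀ hr₁]
    simpa [mul_comm] using mul_gauge_le_norm (x := x) hball₁
  have hg₂ge : ∀ x : E, ‖x‖ / R ≤ g₂ x := fun x =>
    le_gauge_of_subset_closedBall abs₂ hR.le hKR
  have g₂pos : ∀ x : E, x ≠ 0 → 0 < g₂ x := fun x hx =>
    lt_of_lt_of_le (div_pos (norm_pos_iff.2 hx) hR) (hg₂ge x)
  -- Lipschitz estimates for the gauges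
  have lip₁ : ∀ x y : E, |g₁ x - g₁ y| ≤ ‖x - y‖ / r₁ := by
    intro x y
    have := (h₁conv.lipschitzWith_gauge (r := ⟨r₁, hr₁.le⟩) hr₁ hball₁).dist_le_mul x y
    rw [Real.dist_eq, dist_eq_norm] at this
    calc |g₁ x - g₁ y| ≤ ((⟨r₁, hr₁.le⟩ : NNReal)⁻¹ : NNReal) * ‖x - y‖ := this
      _ = ‖x - y‖ / r₁ := by
          change (r₁)⁻¹ * ‖x - y‖ = ‖x - y‖ / r₁
          simp [div_eq_inv_mul, mul_comm]
  have lip₂ : ∀ x y : E, |g₂ x - g₂ y| ≤ ‖x - y‖ / r₂ := by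
    intro x y
    have := (h₂conv.lipschitzWith_gauge (r := ⟨r₂, hr₂.le⟩) hr₂ hball₂).dist_le_mul x y
    rw [Real.dist_eq, dist_eq_norm] at this
    calc |g₂ x - g₂ y| ≤ ((⟨r₂, hr₂.le⟩ : NNReal)⁻¹ : NNReal) * ‖x - y‖ := this
      _ = ‖x - y‖ / r₂ := by
          change (r₂)⁻¹ * ‖x - y‖ = ‖x - y‖ / r₂
          simp [div_eq_inv_mul, mul_comm]
  -- bound on the radial factor
  have hc_bound : ∀ x : E, x ≠ 0 → g₁ x / g₂ x ≤ R / r₁ := by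
    intro x hx
    rw [div_le_iff₀ (g₂pos x hx)]
    calc g₁ x ≤ ‖x‖ / r₁ := hg₁le x
      _ = (R / r₁) * (‖x‖ / R) := by field_simp
      _ ≤ (R / r₁) * g₂ x :=
          mul_le_mul_of_nonneg_left (hg₂ge x) (by positivity)
  set C : ℝ := R / r₁ + ((R / r₁) * (1 / r₂) + 1 / r₁) * R with hC
  have hCpos : 0 < C := by positivity
  refine ⟨C, hCpos, ?_⟩
  have hnorm_bound : ∀ x : E, ‖φ x‖ ≤ C * ‖x‖ := by
    intro x
    rcases eq_or_ne x 0 with rfl | hx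
    · simp [hφ0]
    · rw [hφ x hx, norm_smul, Real.norm_eq_abs,
        abs_of_nonneg (div_nonneg (gauge_nonneg _) (gauge_nonneg _))]
      have h1 : g₁ x / g₂ x ≤ C := le_trans (hc_bound x hx) (by
        have : (0:ℝ) ≤ ((R / r₁) * (1 / r₂) + 1 / r₁) * R := by positivity
        linarith)
      exact mul_le_mul_of_nonneg_right h1 (norm_nonneg x)
  intro x y
  rcases eq_or_ne x 0 with rfl | hx
  · simpa [hφ0, norm_sub_rev] using hnorm_bound y
  rcases eq_or_ne y 0 with rfl | hy
  · simpa [hφ0] using hnorm_bound x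
  rw [hφ x hx, hφ y hy]
  set a₁ := g₁ x with ha₁d; set a₂ := g₂ x with ha₂d
  set b₁ := g₁ y with hb₁d; set b₂ := g₂ y with hb₂d
  have ha₂ : 0 < a₂ := g₂pos x hx
  have hb₂ : 0 < b₂ := g₂pos y hy
  have ha₁ : 0 ≤ a₁ := gauge_nonneg x
  have htn : (0:ℝ) ≤ ‖x - y‖ := norm_nonneg _
  have key : (a₁ / a₂) • x - (b₁ / b₂) • y
      = (a₁ / a₂) • (x - y) + ((a₁ / a₂) - (b₁ / b₂)) • y := by
    rw [smul_sub, sub_smul]; abel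
  rw [key]
  have hy_le : ‖y‖ ≤ R * b₂ := by
    have := hg₂ge y
    rw [div_le_iff₀ hR] at this
    linarith [this]
  have num_bound : |a₁ * b₂ - a₂ * b₁| ≤ a₁ * (‖x - y‖ / r₂) + a₂ * (‖x - y‖ / r₁) := by
    have h : a₁ * b₂ - a₂ * b₁ = a₁ * (b₂ - a₂) + a₂ * (a₁ - b₁) := by ring
    rw [h]
    calc |a₁ * (b₂ - a₂) + a₂ * (a₁ - b₁)|
        ≤ |a₁ * (b₂ - a₂)| + |a₂ * (a₁ - b₁)| := abs_add_le _ _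
      _ = a₁ * |b₂ - a₂| + a₂ * |a₁ - b₁| := by
          rw [abs_mul, abs_mul, abs_of_nonneg ha₁, abs_of_nonneg ha₂.le]
      _ ≤ a₁ * (‖x - y‖ / r₂) + a₂ * (‖x - y‖ / r₁) := by
          gcongr
          · simpa [abs_sub_comm, norm_sub_rev] using lip₂ y x
          · exact lip₁ x y
  have diff_eq : a₁ / a₂ - b₁ / b₂ = (a₁ * b₂ - a₂ * b₁) / (a₂ * b₂) :=
    div_sub_div _ _ ha₂.ne' hb₂.ne'
  have hnn : (0:ℝ) ≤ (a₁ * (‖x - y‖ / r₂) + a₂ * (‖x - y‖ / r₁)) / (a₂ * b₂) :=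
    div_nonneg (add_nonneg (mul_nonneg ha₁ (div_nonneg htn hr₂.le))
      (mul_nonneg ha₂.le (div_nonneg htn hr₁.le))) (mul_pos ha₂ hb₂).le
  have hΔ : |a₁ / a₂ - b₁ / b₂| * ‖y‖ ≤ ((R / r₁) * (1 / r₂) + 1 / r₁) * R * ‖x - y‖ := by
    have habs : |a₁ / a₂ - b₁ / b₂| = |a₁ * b₂ - a₂ * b₁| / (a₂ * b₂) := by
      rw [diff_eq, abs_div, abs_of_pos (mul_pos ha₂ hb₂)]
    have h1 : |a₁ * b₂ - a₂ * b₁| / (a₂ * b₂)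
        ≤ (a₁ * (‖x - y‖ / r₂) + a₂ * (‖x - y‖ / r₁)) / (a₂ * b₂) := by
      gcongr
    have ha₂' : a₂ ≠ 0 := ha₂.ne'
    have hb₂' : b₂ ≠ 0 := hb₂.ne'
    have hr₁' : r₁ ≠ 0 := hr₁.ne'
    have hr₂' : r₂ ≠ 0 := hr₂.ne'
    calc |a₁ / a₂ - b₁ / b₂| * ‖y‖
        = (|a₁ * b₂ - a₂ * b₁| / (a₂ * b₂)) * ‖y‖ := by rw [habs]
      _ ≤ ((a₁ * (‖x - y‖ / r₂) + a₂ * (‖x - y‖ / r₁)) / (a₂ * b₂)) * (R * b₂) :=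
          mul_le_mul h1 hy_le (norm_nonneg y) hnn
      _ = ((a₁ / a₂) * (‖x - y‖ / r₂) + ‖x - y‖ / r₁) * R := by
          field_simp
      _ ≤ ((R / r₁) * (‖x - y‖ / r₂) + ‖x - y‖ / r₁) * R := by
          refine mul_le_mul_of_nonneg_right ?_ hR.le
          exact add_le_add_left
            (mul_le_mul_of_nonneg_right (hc_bound x hx) (div_nonneg htn hr₂.le)) _
      _ = ((R / r₁) * (1 / r₂) + 1 / r₁) * R * ‖x - y‖ := by ring
  have hcnn : (0:ℝ) ≤ a₁ / a₂ := div_nonneg ha₁ ha₂.le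
  calc ‖(a₁ / a₂) • (x - y) + ((a₁ / a₂) - (b₁ / b₂)) • y‖
      ≤ ‖(a₁ / a₂) • (x - y)‖ + ‖((a₁ / a₂) - (b₁ / b₂)) • y‖ := norm_add_le _ _
    _ = (a₁ / a₂) * ‖x - y‖ + |a₁ / a₂ - b₁ / b₂| * ‖y‖ := by
        rw [norm_smul, norm_smul, Real.norm_eq_abs, Real.norm_eq_abs, abs_of_nonneg hcnn]
    _ ≤ (R / r₁) * ‖x - y‖ + ((R / r₁) * (1 / r₂) + 1 / r₁) * R * ‖x - y‖ :=
        add_le_add (mul_le_mul_of_nonneg_right (hc_bound x hx) htn) hΔ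
    _ = C * ‖x - y‖ := by rw [hC]; ring

/-- **Sz.-Nagy–Klee theorem.**
Let `K₁, K₂` be compact convex bodies (with `0` in their interiors) in a
finite-dimensional real normed space.  The radial projection
`φ x = (gauge K₁ x / gauge K₂ x) • x` (with `φ 0 = 0`) maps `K₁` bijectively onto
`K₂` and is bi-Lipschitz on `K₁`. -/
theorem szNagy_Klee_radial_projection
    {E : Type*} [NormedAddCommGroup E] [NormedSpace ℝ E] [FiniteDimensional ℝ E]
    (K₁ K₂ : Set E) (h₁comp : IsCompact K₁) (h₂comp : IsCompact K₂)
    (h₁conv : Convex ℝ K₁) (h₂conv : Convex ℝ K₂)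
    (h₁zero : (0 : E) ∈ interior K₁) (h₂zero : (0 : E) ∈ interior K₂)
    (φ : E → E) (hφ0 : φ 0 = 0)
    (hφ : ∀ x : E, x ≠ 0 → φ x = (gauge K₁ x / gauge K₂ x) • x) :
    Set.BijOn φ K₁ K₂ ∧
      ∃ C : ℝ, 1 ≤ C ∧ ∀ x ∈ K₁, ∀ y ∈ K₁,
        (1 / C) * ‖x - y‖ ≤ ‖φ x - φ y‖ ∧ ‖φ x - φ y‖ ≤ C * ‖x - y‖ := by
  classical
  have h₁nhds : K₁ ∈ nhds (0 : E) := mem_interior_iff_mem_nhds.1 h₁zero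
  have h₂nhds : K₂ ∈ nhds (0 : E) := mem_interior_iff_mem_nhds.1 h₂zero
  have abs₁ : Absorbent ℝ K₁ := absorbent_nhds_zero h₁nhds
  have abs₂ : Absorbent ℝ K₂ := absorbent_nhds_zero h₂nhds
  obtain ⟨R₁, hR₁, hKR₁⟩ := h₁comp.isBounded.subset_closedBall_lt 0 0
  obtain ⟨R₂, hR₂, hKR₂⟩ := h₂comp.isBounded.subset_closedBall_lt 0 0
  have g₁pos : ∀ x : E, x ≠ 0 → 0 < gauge K₁ x := fun x hx =>
    lt_of_lt_of_le (div_pos (norm_pos_iff.2 hx) hR₁)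
      (le_gauge_of_subset_closedBall abs₁ hR₁.le hKR₁)
  have g₂pos : ∀ x : E, x ≠ 0 → 0 < gauge K₂ x := fun x hx =>
    lt_of_lt_of_le (div_pos (norm_pos_iff.2 hx) hR₂)
      (le_gauge_of_subset_closedBall abs₂ hR₂.le hKR₂)
  have mem₁ : ∀ x : E, x ∈ K₁ ↔ gauge K₁ x ≤ 1 := by
    intro x
    rw [gauge_le_one_iff_mem_closure h₁conv h₁nhds, h₁comp.isClosed.closure_eq]
  have mem₂ : ∀ x : E, x ∈ K₂ ↔ gauge K₂ x ≤ 1 := by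
    intro x
    rw [gauge_le_one_iff_mem_closure h₂conv h₂nhds, h₂comp.isClosed.closure_eq]
  -- the inverse map
  set ψ : E → E := fun y => if y = 0 then 0 else (gauge K₂ y / gauge K₁ y) • y with hψdef
  have hψ0 : ψ 0 = 0 := by simp [hψdef]
  have hψ : ∀ y : E, y ≠ 0 → ψ y = (gauge K₂ y / gauge K₁ y) • y := by
    intro y hy; simp [hψdef, hy]
  -- gauge computations
  have gauge_φ : ∀ x : E, x ≠ 0 → gauge K₂ (φ x) = gauge K₁ x := by
    intro x hx
    have h2 : gauge K₂ x ≠ 0 := (g₂pos x hx).ne'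
    rw [hφ x hx,
      gauge_smul_of_nonneg (div_nonneg (gauge_nonneg _) (gauge_nonneg _)),
      smul_eq_mul, div_mul_cancel₀ _ h2]
  have gauge_ψ : ∀ y : E, y ≠ 0 → gauge K₁ (ψ y) = gauge K₂ y := by
    intro y hy
    have h1 : gauge K₁ y ≠ 0 := (g₁pos y hy).ne'
    rw [hψ y hy,
      gauge_smul_of_nonneg (div_nonneg (gauge_nonneg _) (gauge_nonneg _)),
      smul_eq_mul, div_mul_cancel₀ _ h1]
  have φne : ∀ x : E, x ≠ 0 → φ x ≠ 0 := by
    intro x hx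
    rw [hφ x hx]
    exact smul_ne_zero (div_pos (g₁pos x hx) (g₂pos x hx)).ne' hx
  have ψne : ∀ y : E, y ≠ 0 → ψ y ≠ 0 := by
    intro y hy
    rw [hψ y hy]
    exact smul_ne_zero (div_pos (g₂pos y hy) (g₁pos y hy)).ne' hy
  -- ψ is a two-sided inverse of φ
  have hinv₁ : ∀ x : E, ψ (φ x) = x := by
    intro x
    rcases eq_or_ne x 0 with rfl | hx
    · rw [hφ0, hψ0]
    · have h1 : gauge K₁ x ≠ 0 := (g₁pos x hx).ne'
      have h2 : gauge K₂ x ≠ 0 := (g₂pos x hx).ne'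
      have hc : (0:ℝ) ≤ gauge K₁ x / gauge K₂ x :=
        div_nonneg (gauge_nonneg _) (gauge_nonneg _)
      rw [hψ (φ x) (φne x hx), hφ x hx,
        gauge_smul_of_nonneg hc, gauge_smul_of_nonneg hc, smul_smul]
      simp only [smul_eq_mul]
      rw [show gauge K₁ x / gauge K₂ x * gauge K₂ x /
          (gauge K₁ x / gauge K₂ x * gauge K₁ x) * (gauge K₁ x / gauge K₂ x) = 1 by
        field_simp]
      rw [one_smul]
  have hinv₂ : ∀ y : E, φ (ψ y) = y := by
    intro y
    rcases eq_or_ne y 0 with rfl | hy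
    · rw [hψ0, hφ0]
    · have h1 : gauge K₁ y ≠ 0 := (g₁pos y hy).ne'
      have h2 : gauge K₂ y ≠ 0 := (g₂pos y hy).ne'
      have hc : (0:ℝ) ≤ gauge K₂ y / gauge K₁ y :=
        div_nonneg (gauge_nonneg _) (gauge_nonneg _)
      rw [hφ (ψ y) (ψne y hy), hψ y hy,
        gauge_smul_of_nonneg hc, gauge_smul_of_nonneg hc, smul_smul]
      simp only [smul_eq_mul]
      rw [show gauge K₂ y / gauge K₁ y * gauge K₁ y /
          (gauge K₂ y / gauge K₁ y * gauge K₂ y) * (gauge K₂ y / gauge K₁ y) = 1 by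
        field_simp]
      rw [one_smul]
  -- maps-to properties
  have maps₁ : Set.MapsTo φ K₁ K₂ := by
    intro x hx
    rcases eq_or_ne x 0 with rfl | hx0
    · rw [hφ0]; exact mem_of_mem_nhds h₂nhds
    · rw [mem₂, gauge_φ x hx0]
      exact (mem₁ x).1 hx
  have maps₂ : Set.MapsTo ψ K₂ K₁ := by
    intro y hy
    rcases eq_or_ne y 0 with rfl | hy0
    · rw [hψ0]; exact mem_of_mem_nhds h₁nhds
    · rw [mem₁, gauge_ψ y hy0]
      exact (mem₂ y).1 hy
  have hbij : Set.BijOn φ K₁ K₂ :=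
    Set.InvOn.bijOn ⟨fun x _ => hinv₁ x, fun y _ => hinv₂ y⟩ maps₁ maps₂
  refine ⟨hbij, ?_⟩
  obtain ⟨Cφ, hCφ, hlipφ⟩ :=
    radial_lip_aux h₁conv h₂conv h₁zero h₂zero h₂comp.isBounded φ hφ0 hφ
  obtain ⟨Cψ, hCψ, hlipψ⟩ :=
    radial_lip_aux h₂conv h₁conv h₂zero h₁zero h₁comp.isBounded ψ hψ0 hψ
  refine ⟨max (max Cφ Cψ) 1, le_max_right _ _, ?_⟩
  set C : ℝ := max (max Cφ Cψ) 1 with hCdef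
  have hC1 : (1:ℝ) ≤ C := le_max_right _ _
  have hCpos : (0:ℝ) < C := lt_of_lt_of_le one_pos hC1
  have hCφle : Cφ ≤ C := le_trans (le_max_left _ _) (le_max_left _ _)
  have hCψle : Cψ ≤ C := le_trans (le_max_right _ _) (le_max_left _ _)
  intro x _ y _
  constructor
  · have h1 : ‖x - y‖ ≤ C * ‖φ x - φ y‖ := by
      calc ‖x - y‖ = ‖ψ (φ x) - ψ (φ y)‖ := by rw [hinv₁ x, hinv₁ y]
        _ ≤ Cψ * ‖φ x - φ y‖ := hlipψ _ _
        _ ≤ C * ‖φ x - φ y‖ :=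
            mul_le_mul_of_nonneg_right hCψle (norm_nonneg _)
    calc (1 / C) * ‖x - y‖ ≤ (1 / C) * (C * ‖φ x - φ y‖) :=
          mul_le_mul_of_nonneg_left h1 (by positivity)
      _ = ‖φ x - φ y‖ := by field_simp
  · calc ‖φ x - φ y‖ ≤ Cφ * ‖x - y‖ := hlipφ x y
      _ ≤ C * ‖x - y‖ := mul_le_mul_of_nonneg_right hCφle (norm_nonneg _)
end

section
/- The map ℂⁿ → ℂ[x] sending (a₁, …, aₙ) to the polynomial P_{aₙ} ∘ ⋯ ∘ P_{a₁} is injective: if P_{aₙ} ∘ ⋯ ∘ P_{a₁} = P_{a'ₙ} ∘ ⋯ ∘ P_{a'₁} as polynomials, then aᵢ = a'ᵢ for all 1 ≤ i ≤ n. -/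
/-- The polynomial `P_{aₙ} ∘ ⋯ ∘ P_{a₁}`, where `P_a(z) = z² + a`.
Here `a i` plays the role of `a_{i+1}`, i.e. `P_{a₁}` is applied first. -/
noncomputable def compQuadPoly : (n : ℕ) → (Fin n → ℂ) → Polynomial ℂ
  | 0, _ => Polynomial.X
  | n + 1, a =>
      (Polynomial.X ^ 2 + Polynomial.C (a (Fin.last n))).comp
        (compQuadPoly n (a ∘ Fin.castSucc))

open Polynomial

lemma compQuadPoly_monic (n : ℕ) (a : Fin n → ℂ) :
    (compQuadPoly n a).Monic ∧ (compQuadPoly n a).natDegree = 2 ^ n := by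
  induction n with
  | zero => simpa [compQuadPoly] using monic_X
  | succ n ih =>
    obtain ⟨hm, hd⟩ := ih (a ∘ Fin.castSucc)
    have hq : (X ^ 2 + C (a (Fin.last n)) : ℂ[X]).Monic :=
      monic_X_pow_add_C _ two_ne_zero
    constructor
    · exact hq.comp hm (by rw [hd]; positivity)
    · rw [compQuadPoly, natDegree_comp, hd,
        natDegree_X_pow_add_C, pow_succ, Nat.mul_comm]

/-- The map `(a₁, …, aₙ) ↦ P_{aₙ} ∘ ⋯ ∘ P_{a₁}` is injective. -/
theorem compQuadPoly_injective (n : ℕ) (a a' : Fin n → ℂ)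
    (h : compQuadPoly n a = compQuadPoly n a') : a = a' := by
  induction n with
  | zero => ext i; exact absurd i.2 (by omega)
  | succ n ih =>
    set Q := compQuadPoly n (a ∘ Fin.castSucc) with hQ
    set Q' := compQuadPoly n (a' ∘ Fin.castSucc) with hQ'
    obtain ⟨hm, hd⟩ := compQuadPoly_monic n (a ∘ Fin.castSucc)
    obtain ⟨hm', hd'⟩ := compQuadPoly_monic n (a' ∘ Fin.castSucc)
    have h' : Q ^ 2 + C (a (Fin.last n)) = Q' ^ 2 + C (a' (Fin.last n)) := by
      have := h
      simp only [compQuadPoly, add_comp, pow_comp, X_comp, C_comp] at this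
      exact this
    have hQQ : Q = Q' := by
      by_contra hne
      have hD : Q - Q' ≠ 0 := sub_ne_zero.mpr hne
      have hsum : (Q + Q').coeff (2 ^ n) = 2 := by
        have h1 : Q.coeff (2 ^ n) = 1 := by
          rw [← hd]; exact hm.coeff_natDegree
        have h2 : Q'.coeff (2 ^ n) = 1 := by
          rw [← hd']; exact hm'.coeff_natDegree
        simp [coeff_add, h1, h2]; ring
      have hle : 2 ^ n ≤ (Q + Q').natDegree :=
        le_natDegree_of_ne_zero (by rw [hsum]; norm_num)
      have hS : Q + Q' ≠ 0 := fun h0 => by simp [h0] at hsum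
      have key : (Q - Q') * (Q + Q') = C (a' (Fin.last n) - a (Fin.last n)) := by
        ring_nf
        rw [map_sub]
        linear_combination h'
      have := congrArg natDegree key
      rw [natDegree_mul hD hS, natDegree_C] at this
      have h1 : 1 ≤ 2 ^ n := Nat.one_le_two_pow
      omega
    have hc : a (Fin.last n) = a' (Fin.last n) := by
      rw [hQQ] at h'
      have := add_left_cancel h'
      exact C_injective this
    have htail : a ∘ Fin.castSucc = a' ∘ Fin.castSucc := ih _ _ hQQ
    funext i
    induction i using Fin.lastCases with
    | last => exact hc
    | cast j => exact congrFun htail j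
end

section
/- Let F ∈ ℂ[x] be a monic polynomial of degree 4 whose derivative F' has three pairwise distinct roots 0, c₁, c₂, and suppose F(c₁) = F(c₂) while F(0) ≠ F(c₁). Then c₂ = −c₁ and F(x) = (x² − c₁²)² + F(c₁) for all x ∈ ℂ; in particular F = P_b ∘ P_a with a = −c₁² and b = F(c₁), so F is a polynomial of type 2. -/
/-- A monic degree-4 polynomial whose derivative has the three pairwise distinct roots
`0, c₁, c₂` and satisfying `F(c₁) = F(c₂)`, `F(0) ≠ F(c₁)` is a composition of two
quadratics: `c₂ = −c₁` and `F(x) = (x² − c₁²)² + F(c₁)`, i.e. `F = P_b ∘ P_a` with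
`a = −c₁²`, `b = F(c₁)`. -/
theorem degree_four_type_two (F : Polynomial ℂ) (hmonic : F.Monic)
    (hdeg : F.natDegree = 4) (c₁ c₂ : ℂ)
    (h0 : (Polynomial.derivative F).eval 0 = 0)
    (h1 : (Polynomial.derivative F).eval c₁ = 0)
    (h2 : (Polynomial.derivative F).eval c₂ = 0)
    (hc₁ : c₁ ≠ 0) (hc₂ : c₂ ≠ 0) (hc₁₂ : c₁ ≠ c₂)
    (hv : F.eval c₁ = F.eval c₂) (hv0 : F.eval 0 ≠ F.eval c₁) :
    c₂ = -c₁ ∧ (∀ x : ℂ, F.eval x = (x ^ 2 - c₁ ^ 2) ^ 2 + F.eval c₁) ∧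
      F = (Polynomial.X ^ 2 + Polynomial.C (F.eval c₁)).comp
            (Polynomial.X ^ 2 + Polynomial.C (-c₁ ^ 2)) := by
  set d0 := F.coeff 0 with hd0def
  set d1 := F.coeff 1 with hd1def
  set d2 := F.coeff 2 with hd2def
  set d3 := F.coeff 3 with hd3def
  have hc4 : F.coeff 4 = 1 := by
    have := hmonic.coeff_natDegree
    rwa [hdeg] at this
  have hdlt : (Polynomial.derivative F).natDegree < 4 := by
    have := Polynomial.natDegree_derivative_lt (p := F) (by rw [hdeg]; norm_num)
    rwa [hdeg] at this
  have hevalD : ∀ x : ℂ, (Polynomial.derivative F).eval x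
      = d1 + 2 * d2 * x + 3 * d3 * x ^ 2 + 4 * x ^ 3 := by
    intro x
    rw [Polynomial.eval_eq_sum_range' hdlt]
    simp [Finset.sum_range_succ, Polynomial.coeff_derivative, hc4]
    ring
  have hevalF : ∀ x : ℂ, F.eval x
      = d0 + d1 * x + d2 * x ^ 2 + d3 * x ^ 3 + x ^ 4 := by
    intro x
    have h5 : F.natDegree < 5 := by rw [hdeg]; norm_num
    rw [Polynomial.eval_eq_sum_range' h5]
    simp [Finset.sum_range_succ, hc4]
    rfl
  have hE0 : d1 = 0 := by
    have := h0; rw [hevalD 0] at this; linear_combination this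
  have hE1 : d1 + 2 * d2 * c₁ + 3 * d3 * c₁ ^ 2 + 4 * c₁ ^ 3 = 0 := by
    rw [← hevalD c₁]; exact h1
  have hE2 : d1 + 2 * d2 * c₂ + 3 * d3 * c₂ ^ 2 + 4 * c₂ ^ 3 = 0 := by
    rw [← hevalD c₂]; exact h2
  have hEv : d0 + d1 * c₁ + d2 * c₁ ^ 2 + d3 * c₁ ^ 3 + c₁ ^ 4
      = d0 + d1 * c₂ + d2 * c₂ ^ 2 + d3 * c₂ ^ 3 + c₂ ^ 4 := by
    rw [← hevalF c₁, ← hevalF c₂]; exact hv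
  have hsub : c₁ - c₂ ≠ 0 := sub_ne_zero.mpr hc₁₂
  have A1 : 2 * d2 + 3 * d3 * c₁ + 4 * c₁ ^ 2 = 0 := by
    have h : c₁ * (2 * d2 + 3 * d3 * c₁ + 4 * c₁ ^ 2) = 0 := by
      linear_combination hE1 - hE0
    rcases mul_eq_zero.mp h with h | h
    · exact absurd h hc₁
    · exact h
  have A2 : 2 * d2 + 3 * d3 * c₂ + 4 * c₂ ^ 2 = 0 := by
    have h : c₂ * (2 * d2 + 3 * d3 * c₂ + 4 * c₂ ^ 2) = 0 := by
      linear_combination hE2 - hE0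
    rcases mul_eq_zero.mp h with h | h
    · exact absurd h hc₂
    · exact h
  have B : 3 * d3 + 4 * (c₁ + c₂) = 0 := by
    have h : (c₁ - c₂) * (3 * d3 + 4 * (c₁ + c₂)) = 0 := by
      linear_combination A1 - A2
    rcases mul_eq_zero.mp h with h | h
    · exact absurd h hsub
    · exact h
  have C : d2 = 2 * c₁ * c₂ := by
    linear_combination A1 / 2 - c₁ / 2 * B
  have hQ : (c₁ + c₂) * (c₁ ^ 2 + c₂ ^ 2) + d3 * (c₁ ^ 2 + c₁ * c₂ + c₂ ^ 2)
      + d2 * (c₁ + c₂) = 0 := by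
    have h : (c₁ - c₂) * ((c₁ + c₂) * (c₁ ^ 2 + c₂ ^ 2)
        + d3 * (c₁ ^ 2 + c₁ * c₂ + c₂ ^ 2) + d2 * (c₁ + c₂)) = 0 := by
      linear_combination hEv - (c₁ - c₂) * hE0
    rcases mul_eq_zero.mp h with h | h
    · exact absurd h hsub
    · exact h
  have hs : c₁ + c₂ = 0 := by
    have h : (c₁ + c₂) * (c₁ - c₂) ^ 2 = 0 := by
      linear_combination (-3 : ℂ) * hQ + (c₁ ^ 2 + c₁ * c₂ + c₂ ^ 2) * B
        + 3 * (c₁ + c₂) * C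
    rcases mul_eq_zero.mp h with h | h
    · exact h
    · exact absurd (pow_eq_zero_iff (by norm_num) |>.mp h) hsub
  have hd3 : d3 = 0 := by linear_combination B / 3 - 4 / 3 * hs
  have hd2 : d2 = -2 * c₁ ^ 2 := by linear_combination C + 2 * c₁ * hs
  have hc2 : c₂ = -c₁ := by linear_combination hs
  have hall : ∀ x : ℂ, F.eval x = (x ^ 2 - c₁ ^ 2) ^ 2 + F.eval c₁ := by
    intro x
    rw [hevalF x, hevalF c₁]
    linear_combination (x - c₁) * hE0 + (x ^ 2 - c₁ ^ 2) * hd2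
      + (x ^ 3 - c₁ ^ 3) * hd3
  refine ⟨hc2, hall, ?_⟩
  apply Polynomial.funext
  intro x
  simp only [Polynomial.eval_comp, Polynomial.eval_add, Polynomial.eval_pow,
    Polynomial.eval_X, Polynomial.eval_C]
  rw [hall x]
  ring
end

section
/- Let f : [-1,1] → [-1,1] be a multimodal map of type n admitting two decompositions (f₁, …, fₙ) and (g₁, …, gₙ), so that f = fₙ ∘ ⋯ ∘ f₁ = gₙ ∘ ⋯ ∘ g₁ with each f_i, g_i unimodal. Assume that the set of critical values of f — the set of values f(t) over points t ∈ (-1,1) at which f attains a local extremum — has exactly n elements. Then for every x ∈ [-1,1] and every i ≥ 0, the i-th itinerary letter of x computed from the decomposition (f₁, …, fₙ) equals the i-th itinerary letter of x computed from the decomposition (g₁, …, gₙ). -/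
open Fin.NatCast

/-- The itinerary alphabet `{L, C, R}`. -/
inductive Letter : Type
  | L
  | C
  | R
  deriving DecidableEq

/-- `f : ℝ → ℝ` is a unimodal map of `[-1,1]` with critical point `c`: it is continuous
on `[-1,1]`, maps `[-1,1]` into itself with `{-1,1}` into `{-1,1}`, is strictly
increasing on `[-1,c]` and strictly decreasing on `[c,1]`, with `c ∈ (-1,1)`. -/
structure IsUnimodal (f : ℝ → ℝ) (c : ℝ) : Prop where
  cont : ContinuousOn f (Set.Icc (-1) 1)
  maps : Set.MapsTo f (Set.Icc (-1) 1) (Set.Icc (-1) 1)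
  bdry_neg : f (-1) ∈ ({-1, 1} : Set ℝ)
  bdry_pos : f 1 ∈ ({-1, 1} : Set ℝ)
  cmem : c ∈ Set.Ioo (-1 : ℝ) 1
  mono : StrictMonoOn f (Set.Icc (-1) c)
  anti : StrictAntiOn f (Set.Icc c 1)

/-- The cyclic orbit of `x` under the maps `f₁, …, fₙ` (zero-indexed):
`x₀ = x`, `x_{i+1} = f_{i mod n} (x_i)`.  In particular `cycOrbit f x n` is the value
at `x` of the composition `fₙ ∘ ⋯ ∘ f₁`. -/
def cycOrbit {n : ℕ} [NeZero n] (f : Fin n → ℝ → ℝ) (x : ℝ) : ℕ → ℝ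
  | 0 => x
  | i + 1 => f (i : Fin n) (cycOrbit f x i)

/-- The `i`-th itinerary letter of `x` with respect to the decomposition `f` with
critical points `c`. -/
noncomputable def itin {n : ℕ} [NeZero n] (f : Fin n → ℝ → ℝ) (c : Fin n → ℝ)
    (x : ℝ) (i : ℕ) : Letter :=
  if cycOrbit f x i < c (i : Fin n) then Letter.L
  else if cycOrbit f x i = c (i : Fin n) then Letter.C
  else Letter.R

/-- The set of critical values of `F` on `[-1,1]`: values attained at interior points
where `F` has a local extremum (relative to `[-1,1]`). -/
def critValues (F : ℝ → ℝ) : Set ℝ :=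
  {v : ℝ | ∃ t ∈ Set.Ioo (-1 : ℝ) 1,
    (IsLocalMaxOn F (Set.Icc (-1 : ℝ) 1) t ∨ IsLocalMinOn F (Set.Icc (-1 : ℝ) 1) t) ∧
      F t = v}

namespace ItinAux

open Set

/-- Core unimodal data (no continuity, but with branch surjectivity). -/
structure Uni (f : ℝ → ℝ) (c : ℝ) : Prop where
  maps : Set.MapsTo f (Set.Icc (-1) 1) (Set.Icc (-1) 1)
  cmem : c ∈ Set.Ioo (-1 : ℝ) 1
  mono : StrictMonoOn f (Set.Icc (-1) c)
  anti : StrictAntiOn f (Set.Icc c 1)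
  negb : f (-1) = -1
  posb : f 1 = -1
  surjL : ∀ y, -1 ≤ y → y ≤ f c → ∃ s, s ∈ Set.Icc (-1) c ∧ f s = y
  surjR : ∀ y, -1 ≤ y → y ≤ f c → ∃ s, s ∈ Set.Icc c 1 ∧ f s = y

variable {f : ℝ → ℝ} {c : ℝ}

lemma Uni.le_max (h : Uni f c) {y : ℝ} (hy : y ∈ Set.Icc (-1:ℝ) 1) : f y ≤ f c := by
  obtain ⟨h1, h2⟩ := hy
  rcases lt_trichotomy y c with hlt | heq | hgt
  · exact le_of_lt (h.mono ⟨h1, le_of_lt hlt⟩ ⟨by linarith [h.cmem.1], le_refl c⟩ hlt)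
  · exact le_of_eq (by rw [heq])
  · exact le_of_lt (h.anti ⟨le_refl c, by linarith [h.cmem.2]⟩ ⟨le_of_lt hgt, h2⟩ hgt)

lemma Uni.eq_max (h : Uni f c) {y : ℝ} (hy : y ∈ Set.Icc (-1:ℝ) 1) (he : f y = f c) :
    y = c := by
  obtain ⟨h1, h2⟩ := hy
  rcases lt_trichotomy y c with hlt | heq | hgt
  · exact absurd he (ne_of_lt (h.mono ⟨h1, le_of_lt hlt⟩ ⟨by linarith [h.cmem.1], le_refl c⟩ hlt))
  · exact heq
  · exact absurd he (ne_of_lt (h.anti ⟨le_refl c, by linarith [h.cmem.2]⟩ ⟨le_of_lt hgt, h2⟩ hgt))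

lemma Uni.injL (h : Uni f c) {s t : ℝ} (hs : s ∈ Set.Icc (-1:ℝ) c) (ht : t ∈ Set.Icc (-1:ℝ) c)
    (he : f s = f t) : s = t := h.mono.injOn hs ht he

lemma Uni.injR (h : Uni f c) {s t : ℝ} (hs : s ∈ Set.Icc c (1:ℝ)) (ht : t ∈ Set.Icc c (1:ℝ))
    (he : f s = f t) : s = t := h.anti.injOn hs ht he

/-- Conversion from `IsUnimodal`. -/
lemma _root_.IsUnimodal.uni (h : IsUnimodal f c) : Uni f c := by
  have hc1 : (-1:ℝ) < c := h.cmem.1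
  have hc2 : c < 1 := h.cmem.2
  have hne : f (-1) = -1 := by
    rcases h.bdry_neg with h1 | h1
    · exact h1
    · exfalso
      have : f (-1) < f c := h.mono ⟨le_refl _, le_of_lt hc1⟩ ⟨le_of_lt hc1, le_refl _⟩ hc1
      have : f c ≤ 1 := (h.maps ⟨le_of_lt hc1, le_of_lt hc2⟩).2
      simp only [Set.mem_singleton_iff] at h1
      linarith
  have hpo : f 1 = -1 := by
    rcases h.bdry_pos with h1 | h1
    · exact h1
    · exfalso
      have : f c > f 1 := h.anti ⟨le_refl _, le_of_lt hc2⟩ ⟨le_of_lt hc2, le_refl _⟩ hc2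
      have : f c ≤ 1 := (h.maps ⟨le_of_lt hc1, le_of_lt hc2⟩).2
      simp only [Set.mem_singleton_iff] at h1
      linarith
  refine ⟨h.maps, h.cmem, h.mono, h.anti, hne, hpo, ?_, ?_⟩
  · intro y hy1 hy2
    have hsub : Set.Icc (-1:ℝ) c ⊆ Set.Icc (-1:ℝ) 1 :=
      Set.Icc_subset_Icc (le_refl _) (le_of_lt hc2)
    have := intermediate_value_Icc (le_of_lt hc1) (h.cont.mono hsub)
    have hmem : y ∈ Set.Icc (f (-1)) (f c) := by rw [hne]; exact ⟨hy1, hy2⟩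
    obtain ⟨s, hs, hfs⟩ := this hmem
    exact ⟨s, hs, hfs⟩
  · intro y hy1 hy2
    have hsub : Set.Icc c (1:ℝ) ⊆ Set.Icc (-1:ℝ) 1 :=
      Set.Icc_subset_Icc (le_of_lt hc1) (le_refl _)
    have := intermediate_value_Icc' (le_of_lt hc2) (h.cont.mono hsub)
    have hmem : y ∈ Set.Icc (f 1) (f c) := by rw [hpo]; exact ⟨hy1, hy2⟩
    obtain ⟨s, hs, hfs⟩ := this hmem
    exact ⟨s, hs, hfs⟩

/-- Orbit through stages `j, j+1, …, j+k-1`. -/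
def stg (f : ℕ → ℝ → ℝ) (j : ℕ) (y : ℝ) : ℕ → ℝ
  | 0 => y
  | k+1 => f (j+k) (stg f j y k)

@[simp] lemma stg_zero (f : ℕ → ℝ → ℝ) (j : ℕ) (y : ℝ) : stg f j y 0 = y := rfl

lemma stg_succ (f : ℕ → ℝ → ℝ) (j : ℕ) (y : ℝ) (k : ℕ) :
    stg f j y (k+1) = f (j+k) (stg f j y k) := rfl

lemma stg_add (f : ℕ → ℝ → ℝ) (j a : ℕ) (y : ℝ) :
    ∀ b, stg f j y (a + b) = stg f (j + a) (stg f j y a) b := by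
  intro b
  induction b with
  | zero => rfl
  | succ b ih =>
    rw [← Nat.add_assoc, stg_succ, stg_succ, ih, Nat.add_assoc]

lemma stg_mem {f : ℕ → ℝ → ℝ} {cf : ℕ → ℝ} {m : ℕ} (hU : ∀ i < m, Uni (f i) (cf i))
    {j : ℕ} {y : ℝ} (hy : y ∈ Set.Icc (-1:ℝ) 1) :
    ∀ k, j + k ≤ m → stg f j y k ∈ Set.Icc (-1:ℝ) 1 := by
  intro k
  induction k with
  | zero => intro _; exact hy
  | succ k ih =>
    intro hk
    rw [stg_succ]
    exact (hU (j+k) (by omega)).maps (ih (by omega))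

lemma stg_neg_one {f : ℕ → ℝ → ℝ} {cf : ℕ → ℝ} {m : ℕ} (hU : ∀ i < m, Uni (f i) (cf i)) :
    ∀ k, 1 ≤ k → k ≤ m → stg f 0 (-1) k = -1 ∧ stg f 0 1 k = -1 := by
  intro k
  induction k with
  | zero => omega
  | succ k ih =>
    intro _ hk
    rcases Nat.eq_zero_or_pos k with hk0 | hk1
    · subst hk0
      constructor
      · show f 0 (-1) = -1
        exact (hU 0 (by omega)).negb
      · show f 0 1 = -1
        exact (hU 0 (by omega)).posb
    · obtain ⟨h1, h2⟩ := ih hk1 (by omega)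
      rw [stg_succ, stg_succ, Nat.zero_add, h1, h2]
      exact ⟨(hU k (by omega)).negb, (hU k (by omega)).negb⟩

lemma stg_contOn {f : ℕ → ℝ → ℝ} {cf : ℕ → ℝ} {m : ℕ} (hU : ∀ i < m, Uni (f i) (cf i))
    (k : ℕ) (hk : k ≤ m) (hcont : ∀ i < k, ContinuousOn (f i) (Set.Icc (-1:ℝ) 1)) :
    ContinuousOn (fun x => stg f 0 x k) (Set.Icc (-1:ℝ) 1) := by
  induction k with
  | zero => exact continuousOn_id
  | succ k ih =>
    have hmaps : Set.MapsTo (fun x => stg f 0 x k) (Set.Icc (-1:ℝ) 1) (Set.Icc (-1:ℝ) 1) :=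
      fun x hx => stg_mem hU hx k (by omega)
    have := (hcont k (by omega)).comp (ih (by omega) (fun i hi => hcont i (by omega))) hmaps
    simpa [stg_succ, Nat.zero_add, Function.comp_def] using this


lemma attain {f : ℕ → ℝ → ℝ} {cf : ℕ → ℝ} {m : ℕ} (hU : ∀ i < m, Uni (f i) (cf i))
    (hc : ∀ i, i + 1 < m → cf (i+1) ≤ f i (cf i)) :
    ∀ j < m, ∀ y, -1 ≤ y → y ≤ cf j → ∃ t ∈ Set.Icc (-1:ℝ) 1, stg f 0 t j = y := by
  intro j
  induction j with
  | zero =>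
    intro hj y hy1 hy2
    exact ⟨y, ⟨hy1, le_trans hy2 (le_of_lt (hU 0 hj).cmem.2)⟩, rfl⟩
  | succ j ih =>
    intro hj y hy1 hy2
    have hchain : cf (j+1) ≤ f j (cf j) := hc j hj
    obtain ⟨s, hs, hfs⟩ := (hU j (by omega)).surjL y hy1 (le_trans hy2 hchain)
    obtain ⟨t, ht, hst⟩ := ih (by omega) s hs.1 hs.2
    refine ⟨t, ht, ?_⟩
    rw [stg_succ, Nat.zero_add, hst, hfs]

lemma locMono {f : ℕ → ℝ → ℝ} {cf : ℕ → ℝ} {J : ℕ} (hU : ∀ i < J, Uni (f i) (cf i))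
    (hcont : ∀ i, i + 1 < J → ContinuousOn (f i) (Set.Icc (-1:ℝ) 1))
    {z : ℝ} (hz : z ∈ Set.Ioo (-1:ℝ) 1) (hne : ∀ k < J, stg f 0 z k ≠ cf k) :
    ∃ δ > 0, Set.Icc (z - δ) (z + δ) ⊆ Set.Icc (-1:ℝ) 1 ∧
      (StrictMonoOn (fun x => stg f 0 x J) (Set.Icc (z - δ) (z + δ)) ∨
       StrictAntiOn (fun x => stg f 0 x J) (Set.Icc (z - δ) (z + δ))) := by
  induction J with
  | zero =>
    refine ⟨min (z + 1) (1 - z) / 2, by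
      rcases hz with ⟨h1, h2⟩
      have : 0 < min (z+1) (1-z) := lt_min (by linarith) (by linarith)
      linarith, ?_, Or.inl ?_⟩
    · intro x hx
      rcases hz with ⟨h1, h2⟩
      rcases hx with ⟨hx1, hx2⟩
      have hm1 : min (z+1) (1-z) ≤ z + 1 := min_le_left _ _
      have hm2 : min (z+1) (1-z) ≤ 1 - z := min_le_right _ _
      constructor <;> [linarith; linarith]
    · intro a _ b _ hab
      simpa using hab
  | succ J ih =>
    have hUJ : ∀ i < J, Uni (f i) (cf i) := fun i hi => hU i (by omega)
    have hcontJ : ∀ i, i + 1 < J → ContinuousOn (f i) (Set.Icc (-1:ℝ) 1) :=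
      fun i hi => hcont i (by omega)
    obtain ⟨δ₀, hδ₀, hsub₀, hmono₀⟩ := ih hUJ hcontJ (fun k hk => hne k (by omega))
    -- continuity of F_J on Icc(z-δ₀, z+δ₀)
    have hFcont : ContinuousOn (fun x => stg f 0 x J) (Set.Icc (-1:ℝ) 1) := by
      apply stg_contOn hUJ J (le_refl _)
      intro i hi
      exact hcont i (by omega)
    have hzI : z ∈ Set.Icc (-1:ℝ) 1 := ⟨le_of_lt hz.1, le_of_lt hz.2⟩
    have hFz := hne J (by omega)
    -- ε: distance from F_J z to cf J
    set ε := |stg f 0 z J - cf J| with hε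
    have hεpos : 0 < ε := abs_pos.mpr (sub_ne_zero.mpr hFz)
    have hcw : ContinuousWithinAt (fun x => stg f 0 x J) (Set.Icc (-1:ℝ) 1) z :=
      hFcont z hzI
    rw [Metric.continuousWithinAt_iff] at hcw
    obtain ⟨δ₁, hδ₁, hδ₁p⟩ := hcw ε hεpos
    set δ := min δ₀ (δ₁ / 2) with hδdef
    have hδpos : 0 < δ := lt_min hδ₀ (by linarith)
    have hsub : Set.Icc (z - δ) (z + δ) ⊆ Set.Icc (z - δ₀) (z + δ₀) := by
      apply Set.Icc_subset_Icc <;> [simp [hδdef]; simp [hδdef]] <;> linarith [min_le_left δ₀ (δ₁/2)]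
    have hsubI : Set.Icc (z - δ) (z + δ) ⊆ Set.Icc (-1:ℝ) 1 := fun x hx => hsub₀ (hsub hx)
    have hclose : ∀ x ∈ Set.Icc (z - δ) (z + δ), |stg f 0 x J - stg f 0 z J| < ε := by
      intro x hx
      apply hδ₁p (hsubI hx)
      rcases hx with ⟨h1, h2⟩
      have : δ ≤ δ₁ / 2 := min_le_right _ _
      rw [Real.dist_eq]
      rw [abs_sub_lt_iff]
      constructor <;> linarith
    -- the values of F_J stay on the same side of cf J
    rcases lt_or_gt_of_ne hFz with hside | hside
    · -- F_J z < cf J : f J increasing branch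
      have hmapsL : ∀ x ∈ Set.Icc (z - δ) (z + δ),
          stg f 0 x J ∈ Set.Icc (-1:ℝ) (cf J) := by
        intro x hx
        have h1 := hclose x hx
        have h2 := (stg_mem (j:=0) hUJ (hsubI hx) J (by omega)).1
        rw [abs_lt] at h1
        rw [hε] at h1
        have : |stg f 0 z J - cf J| = cf J - stg f 0 z J := by
          rw [abs_of_neg (by linarith)]; ring
        rw [this] at h1
        exact ⟨by simpa using h2, by linarith [h1.2]⟩
      have hmonoJ : StrictMonoOn (f J) (Set.Icc (-1:ℝ) (cf J)) := (hU J (by omega)).mono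
      rcases hmono₀ with hm | hm
      · refine ⟨δ, hδpos, hsubI, Or.inl ?_⟩
        intro a ha b hb hab
        show f (0 + J) (stg f 0 a J) < f (0 + J) (stg f 0 b J)
        rw [Nat.zero_add]
        exact hmonoJ (hmapsL a ha) (hmapsL b hb) (hm (hsub ha) (hsub hb) hab)
      · refine ⟨δ, hδpos, hsubI, Or.inr ?_⟩
        intro a ha b hb hab
        show f (0 + J) (stg f 0 b J) < f (0 + J) (stg f 0 a J)
        rw [Nat.zero_add]
        exact hmonoJ (hmapsL b hb) (hmapsL a ha) (hm (hsub ha) (hsub hb) hab)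
    · -- F_J z > cf J : f J decreasing branch
      have hmapsR : ∀ x ∈ Set.Icc (z - δ) (z + δ),
          stg f 0 x J ∈ Set.Icc (cf J) (1:ℝ) := by
        intro x hx
        have h1 := hclose x hx
        have h2 := (stg_mem (j:=0) hUJ (hsubI hx) J (by omega)).2
        rw [abs_lt] at h1
        rw [hε] at h1
        have : |stg f 0 z J - cf J| = stg f 0 z J - cf J := by
          rw [abs_of_pos (by linarith)]
        rw [this] at h1
        exact ⟨by linarith [h1.1], h2⟩
      have hantiJ : StrictAntiOn (f J) (Set.Icc (cf J) (1:ℝ)) := (hU J (by omega)).anti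
      rcases hmono₀ with hm | hm
      · refine ⟨δ, hδpos, hsubI, Or.inr ?_⟩
        intro a ha b hb hab
        show f (0 + J) (stg f 0 b J) < f (0 + J) (stg f 0 a J)
        rw [Nat.zero_add]
        exact hantiJ (hmapsR a ha) (hmapsR b hb) (hm (hsub ha) (hsub hb) hab)
      · refine ⟨δ, hδpos, hsubI, Or.inl ?_⟩
        intro a ha b hb hab
        show f (0 + J) (stg f 0 a J) < f (0 + J) (stg f 0 b J)
        rw [Nat.zero_add]
        exact hantiJ (hmapsR b hb) (hmapsR a ha) (hm (hsub ha) (hsub hb) hab)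

set_option maxHeartbeats 3000000 in
theorem AUX : ∀ m : ℕ, ∀ f g : ℕ → ℝ → ℝ, ∀ cf cg : ℕ → ℝ,
    (∀ i < m, Uni (f i) (cf i)) → (∀ i < m, Uni (g i) (cg i)) →
    (∀ i, i + 1 < m → cf (i+1) ≤ f i (cf i)) →
    (∀ i, i + 1 < m → cg (i+1) ≤ g i (cg i)) →
    (∀ i, i + 1 < m → ContinuousOn (f i) (Set.Icc (-1:ℝ) 1)) →
    (∀ i, i + 1 < m → ContinuousOn (g i) (Set.Icc (-1:ℝ) 1)) →
    (∀ j < m, ∀ k < m, stg f j (cf j) (m - j) = stg f k (cf k) (m - k) → j = k) →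
    (∀ j < m, ∀ k < m, stg g j (cg j) (m - j) = stg g k (cg k) (m - k) → j = k) →
    (∀ x ∈ Set.Icc (-1:ℝ) 1, stg f 0 x m = stg g 0 x m) →
    ∀ x ∈ Set.Icc (-1:ℝ) 1, ∀ i < m,
      ((stg f 0 x i < cf i ↔ stg g 0 x i < cg i) ∧
       (stg f 0 x i = cf i ↔ stg g 0 x i = cg i)) := by
  intro m
  induction m with
  | zero => intro f g cf cg _ _ _ _ _ _ _ _ _ x _ i hi; omega
  | succ m ih =>
    intro f g cf cg hUf hUg hcf hcg hKf hKg hvf hvg hsame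
    rcases Nat.eq_zero_or_pos m with hm0 | hmpos
    · -- base case: a single unimodal map
      subst hm0
      have hfg : ∀ x ∈ Set.Icc (-1:ℝ) 1, f 0 x = g 0 x := by
        intro x hx
        have h1 := hsame x hx
        simpa [stg_succ] using h1
      have hUf0 := hUf 0 (by omega)
      have hUg0 := hUg 0 (by omega)
      have hceq : cf 0 = cg 0 := by
        by_contra hne
        have key : ∀ (F G : ℝ → ℝ) (a b : ℝ), (∀ x ∈ Set.Icc (-1:ℝ) 1, F x = G x) →
            Uni F a → Uni G b → a < b → False := by
          intro F G a b hFG hA hB hab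
          have haI : a ∈ Set.Icc (-1:ℝ) 1 := ⟨le_of_lt hA.cmem.1, le_of_lt hA.cmem.2⟩
          have hbI : b ∈ Set.Icc (-1:ℝ) 1 := ⟨le_of_lt hB.cmem.1, le_of_lt hB.cmem.2⟩
          have h1 : G a < G b :=
            hB.mono ⟨haI.1, le_of_lt hab⟩ ⟨hbI.1, le_refl _⟩ hab
          have h2 : F b < F a :=
            hA.anti ⟨le_refl _, haI.2⟩ ⟨le_of_lt hab, hbI.2⟩ hab
          rw [hFG a haI, hFG b hbI] at h2
          linarith
        rcases lt_or_gt_of_ne hne with hlt | hlt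
        · exact key (f 0) (g 0) (cf 0) (cg 0) hfg hUf0 hUg0 hlt
        · exact key (g 0) (f 0) (cg 0) (cf 0) (fun x hx => (hfg x hx).symm) hUg0 hUf0 hlt
      intro x hx i hi
      have hi0 : i = 0 := by omega
      subst hi0
      rw [hceq]
      exact ⟨Iff.rfl, Iff.rfl⟩
    · -- main inductive step, m ≥ 1; level is m+1, last index m
      have hUu : Uni (f m) (cf m) := hUf m (by omega)
      have hUv : Uni (g m) (cg m) := hUg m (by omega)
      -- decomposition of the full map
      have hdecf : ∀ x : ℝ, stg f 0 x (m+1) = f m (stg f 0 x m) := by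
        intro x; rw [stg_succ, Nat.zero_add]
      have hdecg : ∀ x : ℝ, stg g 0 x (m+1) = g m (stg g 0 x m) := by
        intro x; rw [stg_succ, Nat.zero_add]
      -- splitting the orbit at stage k
      have hsplit : ∀ (F : ℕ → ℝ → ℝ) (k : ℕ), k ≤ m + 1 → ∀ x : ℝ,
          stg F 0 x (m+1) = stg F k (stg F 0 x k) (m+1-k) := by
        intro F k hk x
        calc stg F 0 x (m+1) = stg F 0 x (k + (m+1-k)) := by rw [Nat.add_sub_cancel' hk]
        _ = stg F k (stg F 0 x k) (m+1-k) := by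
              rw [stg_add]; rw [Nat.zero_add]
      -- top critical values
      have hvtopf : stg f m (cf m) (m+1-m) = f m (cf m) := by
        have h1 : m + 1 - m = 1 := by omega
        rw [h1, stg_succ, stg_zero, Nat.add_zero]
      have hvtopg : stg g m (cg m) (m+1-m) = g m (cg m) := by
        have h1 : m + 1 - m = 1 := by omega
        rw [h1, stg_succ, stg_zero, Nat.add_zero]
      -- attainment of the top critical point
      obtain ⟨t, htI, htF⟩ := attain hUf hcf m (by omega) (cf m) (le_of_lt hUu.cmem.1) (le_refl _)
      obtain ⟨t', htI', htG⟩ := attain hUg hcg m (by omega) (cg m) (le_of_lt hUv.cmem.1) (le_refl _)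
      -- orbit membership shortcuts
      have hFmem : ∀ x ∈ Set.Icc (-1:ℝ) 1, stg f 0 x m ∈ Set.Icc (-1:ℝ) 1 :=
        fun x hx => stg_mem (j := 0) hUf hx m (by omega)
      have hGmem : ∀ x ∈ Set.Icc (-1:ℝ) 1, stg g 0 x m ∈ Set.Icc (-1:ℝ) 1 :=
        fun x hx => stg_mem (j := 0) hUg hx m (by omega)
      -- the common maximum value M
      have hmaxf : ∀ x ∈ Set.Icc (-1:ℝ) 1, stg f 0 x (m+1) ≤ f m (cf m) := by
        intro x hx; rw [hdecf]; exact hUu.le_max (hFmem x hx)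
      have hmaxg : ∀ x ∈ Set.Icc (-1:ℝ) 1, stg g 0 x (m+1) ≤ g m (cg m) := by
        intro x hx; rw [hdecg]; exact hUv.le_max (hGmem x hx)
      have hattf : stg f 0 t (m+1) = f m (cf m) := by rw [hdecf, htF]
      have hattg : stg g 0 t' (m+1) = g m (cg m) := by rw [hdecg, htG]
      have hMeq : g m (cg m) = f m (cf m) := by
        have h1 : f m (cf m) ≤ g m (cg m) := by
          rw [← hattf, hsame t htI]; exact hmaxg t htI
        have h2 : g m (cg m) ≤ f m (cf m) := by
          rw [← hattg, ← hsame t' htI']; exact hmaxf t' htI'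
        linarith
      -- characterization of the maximum set
      have hiiF : ∀ x ∈ Set.Icc (-1:ℝ) 1,
          (stg f 0 x m = cf m ↔ stg f 0 x (m+1) = f m (cf m)) := by
        intro x hx
        constructor
        · intro h1; rw [hdecf, h1]
        · intro h1; rw [hdecf] at h1; exact hUu.eq_max (hFmem x hx) h1
      have hiiG : ∀ x ∈ Set.Icc (-1:ℝ) 1,
          (stg g 0 x m = cg m ↔ stg g 0 x (m+1) = f m (cf m)) := by
        intro x hx
        constructor
        · intro h1; rw [hdecg, h1, hMeq]
        · intro h1; rw [hdecg, ← hMeq] at h1; exact hUv.eq_max (hGmem x hx) h1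
      -- points attaining the maximum are interior and avoid earlier critical points
      have hMne : (-1:ℝ) < f m (cf m) := by
        have := hUu.mono ⟨le_refl _, le_of_lt hUu.cmem.1⟩
          ⟨le_of_lt hUu.cmem.1, le_refl _⟩ hUu.cmem.1
        rw [hUu.negb] at this; exact this
      have hint_f : ∀ z ∈ Set.Icc (-1:ℝ) 1, stg f 0 z (m+1) = f m (cf m) →
          z ∈ Set.Ioo (-1:ℝ) 1 ∧ ∀ k < m, stg f 0 z k ≠ cf k := by
        intro z hzI hzM
        constructor
        · rcases eq_or_lt_of_le hzI.1 with h1 | h1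
          · exfalso
            have := (stg_neg_one hUf (m+1) (by omega) (le_refl _)).1
            rw [← h1] at hzM; rw [this] at hzM; linarith [hMne, hzM.symm.le]
          rcases eq_or_lt_of_le hzI.2 with h2 | h2
          · exfalso
            have := (stg_neg_one hUf (m+1) (by omega) (le_refl _)).2
            rw [h2] at hzM; rw [this] at hzM; linarith [hMne, hzM.symm.le]
          exact ⟨h1, h2⟩
        · intro k hk hzk
          have h1 : stg f 0 z (m+1) = stg f k (cf k) (m+1-k) := by
            rw [hsplit f k (by omega) z, hzk]
          have h2 : stg f k (cf k) (m+1-k) = stg f m (cf m) (m+1-m) := by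
            rw [← h1, hvtopf, hzM]
          have := hvf k (by omega) m (by omega) h2
          omega
      have hint_g : ∀ z ∈ Set.Icc (-1:ℝ) 1, stg g 0 z (m+1) = f m (cf m) →
          z ∈ Set.Ioo (-1:ℝ) 1 ∧ ∀ k < m, stg g 0 z k ≠ cg k := by
        intro z hzI hzM
        rw [← hMeq] at hzM
        constructor
        · rcases eq_or_lt_of_le hzI.1 with h1 | h1
          · exfalso
            have := (stg_neg_one hUg (m+1) (by omega) (le_refl _)).1
            rw [← h1] at hzM; rw [this] at hzM
            have hMne' : (-1:ℝ) < g m (cg m) := by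
              have := hUv.mono ⟨le_refl _, le_of_lt hUv.cmem.1⟩
                ⟨le_of_lt hUv.cmem.1, le_refl _⟩ hUv.cmem.1
              rw [hUv.negb] at this; exact this
            linarith [hzM.symm.le]
          rcases eq_or_lt_of_le hzI.2 with h2 | h2
          · exfalso
            have := (stg_neg_one hUg (m+1) (by omega) (le_refl _)).2
            rw [h2] at hzM; rw [this] at hzM
            have hMne' : (-1:ℝ) < g m (cg m) := by
              have := hUv.mono ⟨le_refl _, le_of_lt hUv.cmem.1⟩
                ⟨le_of_lt hUv.cmem.1, le_refl _⟩ hUv.cmem.1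
              rw [hUv.negb] at this; exact this
            linarith [hzM.symm.le]
          exact ⟨h1, h2⟩
        · intro k hk hzk
          have h1 : stg g 0 z (m+1) = stg g k (cg k) (m+1-k) := by
            rw [hsplit g k (by omega) z, hzk]
          have h2 : stg g k (cg k) (m+1-k) = stg g m (cg m) (m+1-m) := by
            rw [← h1, hvtopg, hzM]
          have := hvg k (by omega) m (by omega) h2
          omega
      -- continuity of stage-m orbits
      have hFcont : ContinuousOn (fun x => stg f 0 x m) (Set.Icc (-1:ℝ) 1) := by
        apply stg_contOn (fun i hi => hUf i (by omega)) m (le_refl _)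
        intro i hi; exact hKf i (by omega)
      have hGcont : ContinuousOn (fun x => stg g 0 x m) (Set.Icc (-1:ℝ) 1) := by
        apply stg_contOn (fun i hi => hUg i (by omega)) m (le_refl _)
        intro i hi; exact hKg i (by omega)
      -- local strict monotonicity near maximum points
      have hlocm : ∀ z ∈ Set.Icc (-1:ℝ) 1, stg f 0 z (m+1) = f m (cf m) →
          ∃ δ > 0, Set.Icc (z - δ) (z + δ) ⊆ Set.Icc (-1:ℝ) 1 ∧
            (StrictMonoOn (fun x => stg f 0 x m) (Set.Icc (z - δ) (z + δ)) ∨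
             StrictAntiOn (fun x => stg f 0 x m) (Set.Icc (z - δ) (z + δ))) := by
        intro z hzI hzM
        obtain ⟨hzint, hzne⟩ := hint_f z hzI hzM
        exact locMono (fun i hi => hUf i (by omega)) (fun i hi => hKf i (by omega)) hzint hzne
      have hlocmg : ∀ z ∈ Set.Icc (-1:ℝ) 1, stg g 0 z (m+1) = f m (cf m) →
          ∃ δ > 0, Set.Icc (z - δ) (z + δ) ⊆ Set.Icc (-1:ℝ) 1 ∧
            (StrictMonoOn (fun x => stg g 0 x m) (Set.Icc (z - δ) (z + δ)) ∨
             StrictAntiOn (fun x => stg g 0 x m) (Set.Icc (z - δ) (z + δ))) := by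
        intro z hzI hzM
        obtain ⟨hzint, hzne⟩ := hint_g z hzI hzM
        exact locMono (fun i hi => hUg i (by omega)) (fun i hi => hKg i (by omega)) hzint hzne
      -- the positivity of the product θ away from the maximum set
      have htheta : ∀ x ∈ Set.Icc (-1:ℝ) 1, stg f 0 x (m+1) ≠ f m (cf m) →
          0 < (stg f 0 x m - cf m) * (stg g 0 x m - cg m) := by
        intro x₀ hx₀I hx₀M
        by_contra hcon
        push_neg at hcon
        set θ : ℝ → ℝ := fun y => (stg f 0 y m - cf m) * (stg g 0 y m - cg m) with hθdef
        have hθcont : ContinuousOn θ (Set.Icc (-1:ℝ) 1) :=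
          (hFcont.sub continuousOn_const).mul (hGcont.sub continuousOn_const)
        have hθne : ∀ y ∈ Set.Icc (-1:ℝ) 1, stg f 0 y (m+1) ≠ f m (cf m) → θ y ≠ 0 := by
          intro y hyI hyM
          simp only [hθdef, mul_ne_zero_iff, sub_ne_zero]
          constructor
          · intro h1; exact hyM ((hiiF y hyI).1 h1)
          · intro h1; exact hyM (hsame y hyI ▸ (hiiG y hyI).1 h1)
        have hθx₀ : θ x₀ < 0 := lt_of_le_of_ne hcon (hθne x₀ hx₀I hx₀M)
        -- θ is positive at the endpoints
        have hcfI := hUu.cmem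
        have hcgI := hUv.cmem
        have hθneg : θ (-1) > 0 := by
          have h1 := (stg_neg_one hUf (m) (by omega) (by omega)).1
          have h2 := (stg_neg_one hUg (m) (by omega) (by omega)).1
          simp only [hθdef, h1, h2]
          have : (-1:ℝ) - cf m < 0 := by linarith [hcfI.1]
          have : (-1:ℝ) - cg m < 0 := by linarith [hcgI.1]
          nlinarith [hcfI.1, hcgI.1]
        -- take the infimum of the set where θ < 0
        set S : Set ℝ := {y | y ∈ Set.Icc (-1:ℝ) 1 ∧ θ y < 0} with hSdef
        have hSx₀ : x₀ ∈ S := ⟨hx₀I, hθx₀⟩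
        have hSne : S.Nonempty := ⟨x₀, hSx₀⟩
        have hSbd : BddBelow S := ⟨-1, fun y hy => hy.1.1⟩
        set z := sInf S with hzdef
        have hzle : ∀ y ∈ S, z ≤ y := fun y hy => csInf_le hSbd hy
        have hzI : z ∈ Set.Icc (-1:ℝ) 1 :=
          ⟨le_csInf hSne (fun y hy => hy.1.1), le_trans (hzle x₀ hSx₀) hx₀I.2⟩
        have hnear : ∀ δ > 0, ∃ y ∈ S, y < z + δ := by
          intro δ hδ
          by_contra hno
          push_neg at hno
          have : z + δ ≤ z := le_csInf hSne hno
          linarith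
        -- θ z = 0
        have hθz : θ z = 0 := by
          rcases lt_trichotomy (θ z) 0 with h1 | h1 | h1
          · exfalso
            have hzgt : (-1:ℝ) < z := by
              rcases eq_or_lt_of_le hzI.1 with h2 | h2
              · exfalso; rw [← h2] at h1; linarith
              · exact h2
            have hcw := hθcont z hzI
            rw [Metric.continuousWithinAt_iff] at hcw
            obtain ⟨δ, hδ, hδp⟩ := hcw (-θ z) (by linarith)
            set y := z - min (δ/2) ((z+1)/2) with hy
            have hminpos : 0 < min (δ/2) ((z+1)/2) := lt_min (by linarith) (by linarith)
            have hylt : y < z := by simp only [hy]; linarith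
            have hyI : y ∈ Set.Icc (-1:ℝ) 1 := by
              constructor
              · have : min (δ/2) ((z+1)/2) ≤ (z+1)/2 := min_le_right _ _
                simp only [hy]; linarith
              · simp only [hy]; linarith [hzI.2]
            have hdist : dist y z < δ := by
              rw [Real.dist_eq, abs_lt]
              have h3 : min (δ/2) ((z+1)/2) ≤ δ/2 := min_le_left _ _
              constructor <;> simp only [hy] <;> linarith
            have h4 := hδp hyI hdist
            rw [Real.dist_eq, abs_lt] at h4
            have hyS : y ∈ S := ⟨hyI, by linarith [h4.2]⟩
            linarith [hzle y hyS]
          · exact h1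
          · exfalso
            have hcw := hθcont z hzI
            rw [Metric.continuousWithinAt_iff] at hcw
            obtain ⟨δ, hδ, hδp⟩ := hcw (θ z) h1
            obtain ⟨y, hyS, hylt⟩ := hnear δ hδ
            have hdist : dist y z < δ := by
              rw [Real.dist_eq, abs_lt]
              constructor <;> [linarith [hzle y hyS]; linarith]
            have := hδp hyS.1 hdist
            rw [Real.dist_eq, abs_lt] at this
            have := hyS.2
            linarith [this]
        -- z attains the maximum for both orbits
        have hzM : stg f 0 z (m+1) = f m (cf m) := by
          have hor : stg f 0 z m = cf m ∨ stg g 0 z m = cg m := by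
            rcases mul_eq_zero.mp hθz with h | h
            · exact Or.inl (by linarith [sub_eq_zero.mp h])
            · exact Or.inr (by linarith [sub_eq_zero.mp h])
          rcases hor with h | h
          · exact (hiiF z hzI).1 h
          · rw [hsame z hzI]; exact (hiiG z hzI).1 h
        have hzMg : stg g 0 z (m+1) = f m (cf m) := by rw [← hsame z hzI]; exact hzM
        have hFz : stg f 0 z m = cf m := (hiiF z hzI).2 hzM
        have hGz : stg g 0 z m = cg m := (hiiG z hzI).2 hzMg
        obtain ⟨δf, hδf, hsubf, hmf⟩ := hlocm z hzI hzM
        obtain ⟨δg, hδg, hsubg, hmg⟩ := hlocmg z hzI hzMg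
        have hzgt : (-1:ℝ) < z := by
          rcases eq_or_lt_of_le hzI.1 with h | h
          · exfalso
            have h1 := (stg_neg_one hUf m (by omega) (by omega)).1
            rw [← h] at hFz
            have h2 := h1.symm.trans hFz
            linarith [hUu.cmem.1]
          · exact h
        set δ₂ := min (min δf δg) ((z+1)/2) with hδ₂
        have hδ₂pos : 0 < δ₂ := lt_min (lt_min hδf hδg) (by linarith)
        have hδ₂f : δ₂ ≤ δf := le_trans (min_le_left _ _) (min_le_left _ _)
        have hδ₂g : δ₂ ≤ δg := le_trans (min_le_left _ _) (min_le_right _ _)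
        obtain ⟨yp, hypS, hyplt⟩ := hnear δ₂ hδ₂pos
        have hypz : z < yp := by
          rcases eq_or_lt_of_le (hzle yp hypS) with h | h
          · exfalso
            have h2 := hypS.2
            rw [← h] at h2
            linarith [hθz]
          · exact h
        set ym := z - δ₂/2 with hym
        have hymlt : ym < z := by simp only [hym]; linarith
        have hymIf : ym ∈ Set.Icc (z - δf) (z + δf) := ⟨by simp only [hym]; linarith, by simp only [hym]; linarith⟩
        have hymIg : ym ∈ Set.Icc (z - δg) (z + δg) := ⟨by simp only [hym]; linarith, by simp only [hym]; linarith⟩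
        have hzIf : z ∈ Set.Icc (z - δf) (z + δf) := ⟨by linarith, by linarith⟩
        have hzIg : z ∈ Set.Icc (z - δg) (z + δg) := ⟨by linarith, by linarith⟩
        have hypIf : yp ∈ Set.Icc (z - δf) (z + δf) := ⟨by linarith, by linarith⟩
        have hypIg : yp ∈ Set.Icc (z - δg) (z + δg) := ⟨by linarith, by linarith⟩
        have hymI : ym ∈ Set.Icc (-1:ℝ) 1 := hsubf hymIf
        have hymnotS : ym ∉ S := fun hc => absurd (hzle ym hc) (by linarith)
        have hθym_ge : 0 ≤ θ ym := by
          by_contra h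
          push_neg at h
          exact hymnotS ⟨hymI, h⟩
        have hfym_ne : stg f 0 ym m ≠ cf m := by
          intro h
          have heq : ym = z := by
            rcases hmf with hm | hm
            · exact hm.injOn hymIf hzIf (by show stg f 0 ym m = stg f 0 z m; rw [h, hFz])
            · exact hm.injOn hymIf hzIf (by show stg f 0 ym m = stg f 0 z m; rw [h, hFz])
          linarith
        have hgym_ne : stg g 0 ym m ≠ cg m := by
          intro h
          have heq : ym = z := by
            rcases hmg with hm | hm
            · exact hm.injOn hymIg hzIg (by show stg g 0 ym m = stg g 0 z m; rw [h, hGz])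
            · exact hm.injOn hymIg hzIg (by show stg g 0 ym m = stg g 0 z m; rw [h, hGz])
          linarith
        have hθym : 0 < θ ym := by
          rcases lt_or_eq_of_le hθym_ge with h | h
          · exact h
          · exfalso
            exact (mul_ne_zero (sub_ne_zero.mpr hfym_ne) (sub_ne_zero.mpr hgym_ne)) h.symm
        have hFprod : (stg f 0 yp m - cf m) * (stg f 0 ym m - cf m) < 0 := by
          rcases hmf with hm | hm
          · have h1 : stg f 0 ym m < stg f 0 z m := hm hymIf hzIf hymlt
            have h2 : stg f 0 z m < stg f 0 yp m := hm hzIf hypIf hypz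
            rw [hFz] at h1 h2
            exact mul_neg_of_pos_of_neg (by linarith) (by linarith)
          · have h1 : stg f 0 z m < stg f 0 ym m := hm hymIf hzIf hymlt
            have h2 : stg f 0 yp m < stg f 0 z m := hm hzIf hypIf hypz
            rw [hFz] at h1 h2
            exact mul_neg_of_neg_of_pos (by linarith) (by linarith)
        have hGprod : (stg g 0 yp m - cg m) * (stg g 0 ym m - cg m) < 0 := by
          rcases hmg with hm | hm
          · have h1 : stg g 0 ym m < stg g 0 z m := hm hymIg hzIg hymlt
            have h2 : stg g 0 z m < stg g 0 yp m := hm hzIg hypIg hypz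
            rw [hGz] at h1 h2
            exact mul_neg_of_pos_of_neg (by linarith) (by linarith)
          · have h1 : stg g 0 z m < stg g 0 ym m := hm hymIg hzIg hymlt
            have h2 : stg g 0 yp m < stg g 0 z m := hm hzIg hypIg hypz
            rw [hGz] at h1 h2
            exact mul_neg_of_neg_of_pos (by linarith) (by linarith)
        have hprod : 0 < θ yp * θ ym := by
          have hexp : θ yp * θ ym = ((stg f 0 yp m - cf m) * (stg f 0 ym m - cf m)) *
              ((stg g 0 yp m - cg m) * (stg g 0 ym m - cg m)) := by
            simp only [hθdef]; ring
          rw [hexp]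
          exact mul_pos_of_neg_of_neg hFprod hGprod
        have hneg2 : θ yp * θ ym < 0 := mul_neg_of_neg_of_pos hypS.2 hθym
        linarith
      -- full sign agreement at stage m
      have hsign : ∀ x ∈ Set.Icc (-1:ℝ) 1,
          ((stg f 0 x m < cf m ↔ stg g 0 x m < cg m) ∧
           (stg f 0 x m = cf m ↔ stg g 0 x m = cg m)) := by
        intro x hx
        by_cases hM : stg f 0 x (m+1) = f m (cf m)
        · have h1 : stg f 0 x m = cf m := (hiiF x hx).2 hM
          have h2 : stg g 0 x m = cg m := (hiiG x hx).2 (by rw [← hsame x hx]; exact hM)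
          constructor
          · constructor
            · intro h; rw [h1] at h; exact absurd h (lt_irrefl _)
            · intro h; rw [h2] at h; exact absurd h (lt_irrefl _)
          · constructor
            · intro _; exact h2
            · intro _; exact h1
        · have hθpos := htheta x hx hM
          have h1 : stg f 0 x m ≠ cf m := by
            intro h; exact hM ((hiiF x hx).1 h)
          have h2 : stg g 0 x m ≠ cg m := by
            intro h; exact hM (by rw [hsame x hx]; exact (hiiG x hx).1 h)
          constructor
          · constructor
            · intro h
              by_contra h3
              push_neg at h3
              have h4 : cg m < stg g 0 x m := lt_of_le_of_ne h3 (Ne.symm h2)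
              have h5 : (stg f 0 x m - cf m) * (stg g 0 x m - cg m) < 0 :=
                mul_neg_of_neg_of_pos (by linarith) (by linarith)
              linarith
            · intro h
              by_contra h3
              push_neg at h3
              have h4 : cf m < stg f 0 x m := lt_of_le_of_ne h3 (Ne.symm h1)
              have h5 : (stg f 0 x m - cf m) * (stg g 0 x m - cg m) < 0 :=
                mul_neg_of_pos_of_neg (by linarith) (by linarith)
              linarith
          · constructor
            · intro h; exact absurd h h1
            · intro h; exact absurd h h2
      -- construction of the conjugating increasing bijection h on [-1,1]
      have hgb : ∀ y ∈ Set.Icc (-1:ℝ) 1, -1 ≤ g m y ∧ g m y ≤ f m (cf m) := by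
        intro y hy
        exact ⟨(hUv.maps hy).1, le_trans (hUv.le_max hy) (le_of_eq hMeq)⟩
      classical
      obtain ⟨h, hPL, hPR'⟩ :
          ∃ h : ℝ → ℝ,
            (∀ y, y ∈ Set.Icc (-1:ℝ) 1 → y ≤ cg m →
              h y ∈ Set.Icc (-1:ℝ) (cf m) ∧ f m (h y) = g m y) ∧
            (∀ y, y ∈ Set.Icc (-1:ℝ) 1 → ¬ (y ≤ cg m) →
              h y ∈ Set.Icc (cf m) 1 ∧ f m (h y) = g m y) := by
        refine ⟨fun y =>
          if hy : y ∈ Set.Icc (-1:ℝ) 1 then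
            if y ≤ cg m then Classical.choose (hUu.surjL (g m y) (hgb y hy).1 (hgb y hy).2)
            else Classical.choose (hUu.surjR (g m y) (hgb y hy).1 (hgb y hy).2)
          else y, ?_, ?_⟩
        · intro y hy hyd
          simp only [dif_pos hy, if_pos hyd]
          exact Classical.choose_spec (hUu.surjL (g m y) (hgb y hy).1 (hgb y hy).2)
        · intro y hy hyd
          simp only [dif_pos hy, if_neg hyd]
          exact Classical.choose_spec (hUu.surjR (g m y) (hgb y hy).1 (hgb y hy).2)
      have hPval : ∀ y ∈ Set.Icc (-1:ℝ) 1, f m (h y) = g m y := by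
        intro y hy
        by_cases hyd : y ≤ cg m
        · exact (hPL y hy hyd).2
        · exact (hPR' y hy hyd).2
      have hPmem : ∀ y ∈ Set.Icc (-1:ℝ) 1, h y ∈ Set.Icc (-1:ℝ) 1 := by
        intro y hy
        by_cases hyd : y ≤ cg m
        · have := (hPL y hy hyd).1
          exact ⟨this.1, le_trans this.2 (le_of_lt hUu.cmem.2)⟩
        · have := (hPR' y hy hyd).1
          exact ⟨le_trans (le_of_lt hUu.cmem.1) this.1, this.2⟩
      have hPR : ∀ y, ∀ hy : y ∈ Set.Icc (-1:ℝ) 1, cg m ≤ y →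
          h y ∈ Set.Icc (cf m) 1 ∧ f m (h y) = g m y := by
        intro y hy hyd
        by_cases hyd' : y ≤ cg m
        · have hyeq : y = cg m := le_antisymm hyd' hyd
          obtain ⟨hmem, hval⟩ := hPL y hy hyd'
          have hmax : f m (h y) = f m (cf m) := by
            rw [hval, hyeq, hMeq]
          have hhy : h y = cf m := hUu.eq_max ⟨hmem.1, le_trans hmem.2 (le_of_lt hUu.cmem.2)⟩ hmax
          constructor
          · rw [hhy]; exact ⟨le_refl _, le_of_lt hUu.cmem.2⟩
          · exact hval
        · exact hPR' y hy hyd'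
      -- h is strictly monotone on [-1,1]
      have hPmono : StrictMonoOn h (Set.Icc (-1:ℝ) 1) := by
        intro y1 hy1 y2 hy2 h12
        by_cases h1d : y1 ≤ cg m
        · by_cases h2d : y2 ≤ cg m
          · obtain ⟨hm1, hv1⟩ := hPL y1 hy1 h1d
            obtain ⟨hm2, hv2⟩ := hPL y2 hy2 h2d
            have hg12 : g m y1 < g m y2 := hUv.mono ⟨hy1.1, h1d⟩ ⟨hy2.1, h2d⟩ h12
            rw [← hv1, ← hv2] at hg12
            exact (hUu.mono.lt_iff_lt hm1 hm2).mp hg12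
          · obtain ⟨hm1, hv1⟩ := hPL y1 hy1 h1d
            obtain ⟨hm2, hv2⟩ := hPR' y2 hy2 h2d
            have hle : h y1 ≤ h y2 := le_trans hm1.2 hm2.1
            rcases eq_or_lt_of_le hle with heq | hlt
            · exfalso
              have hc1 : h y1 = cf m := le_antisymm hm1.2 (heq ▸ hm2.1)
              have hmax1 : g m y1 = f m (cf m) := by rw [← hv1, hc1]
              have hy1eq : y1 = cg m := hUv.eq_max hy1 (by rw [hmax1, hMeq])
              have hc2 : h y2 = cf m := by rw [← heq, hc1]
              have hmax2 : g m y2 = f m (cf m) := by rw [← hv2, hc2]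
              have hy2eq : y2 = cg m := hUv.eq_max hy2 (by rw [hmax2, hMeq])
              rw [hy1eq, hy2eq] at h12
              exact lt_irrefl _ h12
            · exact hlt
        · by_cases h2d : y2 ≤ cg m
          · exfalso
            push_neg at h1d
            linarith
          · obtain ⟨hm1, hv1⟩ := hPR' y1 hy1 h1d
            obtain ⟨hm2, hv2⟩ := hPR' y2 hy2 h2d
            push_neg at h1d h2d
            have hg12 : g m y2 < g m y1 := hUv.anti ⟨le_of_lt h1d, hy1.2⟩ ⟨le_of_lt h2d, hy2.2⟩ h12
            rw [← hv1, ← hv2] at hg12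
            exact (hUu.anti.lt_iff_gt hm2 hm1).mp hg12
      have hPneg : h (-1) = -1 := by
        have hm1 : (-1:ℝ) ∈ Set.Icc (-1:ℝ) 1 := ⟨le_refl _, by norm_num⟩
        obtain ⟨hmem, hval⟩ := hPL (-1) hm1 (le_of_lt hUv.cmem.1)
        have hval2 : f m (h (-1)) = f m (-1) := by rw [hval, hUv.negb, hUu.negb]
        exact hUu.injL hmem ⟨le_refl _, le_of_lt hUu.cmem.1⟩ hval2
      have hPpos : h 1 = 1 := by
        have hm1 : (1:ℝ) ∈ Set.Icc (-1:ℝ) 1 := ⟨by norm_num, le_refl _⟩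
        obtain ⟨hmem, hval⟩ := hPR 1 hm1 (le_of_lt hUv.cmem.2)
        have hval2 : f m (h 1) = f m 1 := by rw [hval, hUv.posb, hUu.posb]
        exact hUu.injR hmem ⟨le_of_lt hUu.cmem.2, le_refl _⟩ hval2
      -- h is surjective onto [-1,1]
      have hPsurj : ∀ t ∈ Set.Icc (-1:ℝ) 1, ∃ y ∈ Set.Icc (-1:ℝ) 1, h y = t := by
        intro t htI2
        by_cases htc : t ≤ cf m
        · have hft : -1 ≤ f m t := (hUu.maps htI2).1
          have hft2 : f m t ≤ g m (cg m) := by rw [hMeq]; exact hUu.le_max htI2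
          obtain ⟨y, hymem, hyval⟩ := hUv.surjL (f m t) hft hft2
          have hyI : y ∈ Set.Icc (-1:ℝ) 1 := ⟨hymem.1, le_trans hymem.2 (le_of_lt hUv.cmem.2)⟩
          obtain ⟨hhm, hhv⟩ := hPL y hyI hymem.2
          refine ⟨y, hyI, ?_⟩
          apply hUu.injL hhm ⟨htI2.1, htc⟩
          rw [hhv, hyval]
        · push_neg at htc
          have hft : -1 ≤ f m t := (hUu.maps htI2).1
          have hft2 : f m t ≤ g m (cg m) := by rw [hMeq]; exact hUu.le_max htI2
          obtain ⟨y, hymem, hyval⟩ := hUv.surjR (f m t) hft hft2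
          have hyI : y ∈ Set.Icc (-1:ℝ) 1 := ⟨le_trans (le_of_lt hUv.cmem.1) hymem.1, hymem.2⟩
          obtain ⟨hhm, hhv⟩ := hPR y hyI hymem.1
          refine ⟨y, hyI, ?_⟩
          apply hUu.injR hhm ⟨le_of_lt htc, htI2.2⟩
          rw [hhv, hyval]
      -- the truncated g-side decomposition
      set g' : ℕ → ℝ → ℝ := fun i => if i = m - 1 then (fun x => h (g (m-1) x)) else g i
        with hg'def
      have hg'eq : ∀ i, i ≠ m - 1 → g' i = g i := by
        intro i hi; simp only [hg'def, if_neg hi]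
      have hg'last : g' (m-1) = fun x => h (g (m-1) x) := by
        simp only [hg'def, if_pos rfl]
      have hstg'pre : ∀ j (y : ℝ) k, j + k ≤ m - 1 → stg g' j y k = stg g j y k := by
        intro j y k
        induction k with
        | zero => intro _; rfl
        | succ k ihk =>
          intro hk
          rw [stg_succ, stg_succ, ihk (by omega), hg'eq (j+k) (by omega)]
      have hstg'top : ∀ j, j ≤ m - 1 → ∀ y : ℝ, stg g' j y (m - j) = h (stg g j y (m - j)) := by
        intro j hj y
        have e1 : m - j = (m - 1 - j) + 1 := by omega
        rw [e1, stg_succ, stg_succ, hstg'pre j y (m-1-j) (by omega)]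
        have e2 : j + (m - 1 - j) = m - 1 := by omega
        rw [e2, hg'last]
      have hlift : ∀ (F : ℕ → ℝ → ℝ) (c' : ℕ → ℝ) (j : ℕ), j ≤ m →
          stg F j (c' j) (m+1-j) = F m (stg F j (c' j) (m-j)) := by
        intro F c' j hj
        have e1 : m + 1 - j = (m - j) + 1 := by omega
        rw [e1, stg_succ]
        have e2 : j + (m - j) = m := by omega
        rw [e2]
      -- hypotheses for the induction
      have hUg'' : ∀ i < m, Uni (g' i) (cg i) := by
        intro i hi
        by_cases hie : i = m - 1
        · subst hie
          rw [hg'last]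
          have hUgl := hUg (m-1) (by omega)
          have hsub1 : Set.Icc (-1:ℝ) (cg (m-1)) ⊆ Set.Icc (-1:ℝ) 1 :=
            Set.Icc_subset_Icc (le_refl _) (le_of_lt hUgl.cmem.2)
          have hsub2 : Set.Icc (cg (m-1)) (1:ℝ) ⊆ Set.Icc (-1:ℝ) 1 :=
            Set.Icc_subset_Icc (le_of_lt hUgl.cmem.1) (le_refl _)
          have hgc : g (m-1) (cg (m-1)) ∈ Set.Icc (-1:ℝ) 1 :=
            hUgl.maps ⟨le_of_lt hUgl.cmem.1, le_of_lt hUgl.cmem.2⟩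
          refine ⟨?_, hUgl.cmem, ?_, ?_, ?_, ?_, ?_, ?_⟩
          · intro x hx
            exact hPmem _ (hUgl.maps hx)
          · intro x1 hx1 x2 hx2 h12
            exact hPmono (hUgl.maps (hsub1 hx1)) (hUgl.maps (hsub1 hx2)) (hUgl.mono hx1 hx2 h12)
          · intro x1 hx1 x2 hx2 h12
            exact hPmono (hUgl.maps (hsub2 hx2)) (hUgl.maps (hsub2 hx1)) (hUgl.anti hx1 hx2 h12)
          · show h (g (m-1) (-1)) = -1
            rw [hUgl.negb, hPneg]
          · show h (g (m-1) 1) = -1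
            rw [hUgl.posb, hPneg]
          · intro y hy1 hy2
            have hyI : y ∈ Set.Icc (-1:ℝ) 1 := ⟨hy1, le_trans hy2 (hPmem _ hgc).2⟩
            obtain ⟨w, hwI, hwv⟩ := hPsurj y hyI
            have hwle : w ≤ g (m-1) (cg (m-1)) := by
              by_contra hcon
              push_neg at hcon
              have := hPmono hgc hwI hcon
              rw [hwv] at this
              exact absurd hy2 (not_le.mpr this)
            obtain ⟨s, hsmem, hsval⟩ := hUgl.surjL w hwI.1 hwle
            exact ⟨s, hsmem, by show h (g (m-1) s) = y; rw [hsval, hwv]⟩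
          · intro y hy1 hy2
            have hyI : y ∈ Set.Icc (-1:ℝ) 1 := ⟨hy1, le_trans hy2 (hPmem _ hgc).2⟩
            obtain ⟨w, hwI, hwv⟩ := hPsurj y hyI
            have hwle : w ≤ g (m-1) (cg (m-1)) := by
              by_contra hcon
              push_neg at hcon
              have := hPmono hgc hwI hcon
              rw [hwv] at this
              exact absurd hy2 (not_le.mpr this)
            obtain ⟨s, hsmem, hsval⟩ := hUgl.surjR w hwI.1 hwle
            exact ⟨s, hsmem, by show h (g (m-1) s) = y; rw [hsval, hwv]⟩
        · rw [hg'eq i hie]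
          exact hUg i (by omega)
      have hcg'' : ∀ i, i + 1 < m → cg (i+1) ≤ g' i (cg i) := by
        intro i hi
        rw [hg'eq i (by omega)]
        exact hcg i (by omega)
      have hcontg'' : ∀ i, i + 1 < m → ContinuousOn (g' i) (Set.Icc (-1:ℝ) 1) := by
        intro i hi
        rw [hg'eq i (by omega)]
        exact hKg i (by omega)
      have hvf'' : ∀ j < m, ∀ k < m,
          stg f j (cf j) (m - j) = stg f k (cf k) (m - k) → j = k := by
        intro j hj k hk heq
        apply hvf j (by omega) k (by omega)
        rw [hlift f cf j (by omega), hlift f cf k (by omega), heq]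
      have hvg'' : ∀ j < m, ∀ k < m,
          stg g' j (cg j) (m - j) = stg g' k (cg k) (m - k) → j = k := by
        intro j hj k hk heq
        rw [hstg'top j (by omega), hstg'top k (by omega)] at heq
        have hwj : stg g j (cg j) (m - j) ∈ Set.Icc (-1:ℝ) 1 :=
          stg_mem hUg ⟨le_of_lt (hUg j (by omega)).cmem.1, le_of_lt (hUg j (by omega)).cmem.2⟩
            (m - j) (by omega)
        have hwk : stg g k (cg k) (m - k) ∈ Set.Icc (-1:ℝ) 1 :=
          stg_mem hUg ⟨le_of_lt (hUg k (by omega)).cmem.1, le_of_lt (hUg k (by omega)).cmem.2⟩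
            (m - k) (by omega)
        have hw : stg g j (cg j) (m - j) = stg g k (cg k) (m - k) :=
          hPmono.injOn hwj hwk heq
        apply hvg j (by omega) k (by omega)
        rw [hlift g cg j (by omega), hlift g cg k (by omega), hw]
      have hsame'' : ∀ x ∈ Set.Icc (-1:ℝ) 1, stg f 0 x m = stg g' 0 x m := by
        intro x hx
        have e0 : stg g' 0 x m = h (stg g 0 x m) := by
          have := hstg'top 0 (by omega) x
          simpa using this
        rw [e0]
        have hGx : stg g 0 x m ∈ Set.Icc (-1:ℝ) 1 := hGmem x hx
        by_cases hle : stg g 0 x m ≤ cg m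
        · obtain ⟨hhm, hhv⟩ := hPL _ hGx hle
          have hFle : stg f 0 x m ≤ cf m := by
            rcases lt_or_eq_of_le hle with hlt | heq2
            · exact le_of_lt (((hsign x hx).1).mpr hlt)
            · exact le_of_eq (((hsign x hx).2).mpr heq2)
          apply (hUu.injL hhm ⟨(hFmem x hx).1, hFle⟩ _).symm
          rw [hhv, ← hdecg x, ← hsame x hx, hdecf x]
        · obtain ⟨hhm, hhv⟩ := hPR' _ hGx hle
          push_neg at hle
          have hFge : cf m ≤ stg f 0 x m := by
            by_contra hcon
            push_neg at hcon
            have := ((hsign x hx).1).mp hcon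
            linarith
          apply (hUu.injR hhm ⟨hFge, (hFmem x hx).2⟩ _).symm
          rw [hhv, ← hdecg x, ← hsame x hx, hdecf x]
      have hmain := ih f g' cf cg (fun i hi => hUf i (by omega)) hUg''
        (fun i hi => hcf i (by omega)) hcg''
        (fun i hi => hKf i (by omega)) hcontg'' hvf'' hvg'' hsame''
      intro x hx i hi
      rcases Nat.lt_or_ge i m with him | him
      · have hres := hmain x hx i him
        have e1 : stg g' 0 x i = stg g 0 x i := hstg'pre 0 x i (by omega)
        rw [e1] at hres
        exact hres
      · have him' : i = m := by omega
        subst him'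
        exact hsign x hx

lemma critValues_subset_congr {F G : ℝ → ℝ} (hFG : ∀ x ∈ Set.Icc (-1:ℝ) 1, F x = G x) :
    critValues F ⊆ critValues G := by
  rintro v ⟨t, ht, hext, htv⟩
  have htI : t ∈ Set.Icc (-1:ℝ) 1 := ⟨le_of_lt ht.1, le_of_lt ht.2⟩
  have hFt : F t = G t := hFG t htI
  have heq : ∀ᶠ x in nhdsWithin t (Set.Icc (-1:ℝ) 1), F x = G x := by
    filter_upwards [self_mem_nhdsWithin] with x hx
    exact hFG x hx
  refine ⟨t, ht, ?_, by rw [← hFt, htv]⟩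
  rcases hext with hm | hm
  · left
    have hm' : ∀ᶠ x in nhdsWithin t (Set.Icc (-1:ℝ) 1), F x ≤ F t := hm
    show ∀ᶠ x in nhdsWithin t (Set.Icc (-1:ℝ) 1), G x ≤ G t
    filter_upwards [heq, hm'] with x h1 h2
    rw [← h1, ← hFt]
    exact h2
  · right
    have hm' : ∀ᶠ x in nhdsWithin t (Set.Icc (-1:ℝ) 1), F t ≤ F x := hm
    show ∀ᶠ x in nhdsWithin t (Set.Icc (-1:ℝ) 1), G t ≤ G x
    filter_upwards [heq, hm'] with x h1 h2
    rw [← h1, ← hFt]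
    exact h2

lemma critValues_congr {F G : ℝ → ℝ} (hFG : ∀ x ∈ Set.Icc (-1:ℝ) 1, F x = G x) :
    critValues F = critValues G :=
  Set.Subset.antisymm (critValues_subset_congr hFG)
    (critValues_subset_congr (fun x hx => (hFG x hx).symm))

lemma critSub {f : ℕ → ℝ → ℝ} {cf : ℕ → ℝ} {n : ℕ}
    (hU : ∀ i < n, Uni (f i) (cf i))
    (hcont : ∀ i < n, ContinuousOn (f i) (Set.Icc (-1:ℝ) 1)) :
    critValues (fun x => stg f 0 x n) ⊆
      (fun j => stg f j (cf j) (n - j)) '' (Set.Iio n) := by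
  rintro v ⟨t, htIoo, hext, htv⟩
  have hkey : ∃ k < n, stg f 0 t k = cf k := by
    by_contra hcon
    push_neg at hcon
    obtain ⟨δ, hδ, hsub, hmono⟩ :=
      locMono hU (fun i hi => hcont i (by omega)) htIoo hcon
    have hmem1 : t ∈ Set.Icc (t - δ) (t + δ) := ⟨by linarith, by linarith⟩
    rcases hext with hmax | hmin
    · have h3 : {x | stg f 0 x n ≤ stg f 0 t n} ∈ nhdsWithin t (Set.Icc (-1:ℝ) 1) := hmax
      rw [Metric.mem_nhdsWithin_iff] at h3
      obtain ⟨ε, hε, hball⟩ := h3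
      have hminpos : 0 < min δ ε := lt_min hδ hε
      set ρ := min δ ε / 2 with hρ
      have hρpos : 0 < ρ := by simp only [hρ]; linarith
      have hρδ : ρ ≤ δ := by simp only [hρ]; linarith [min_le_left δ ε]
      have hρε : ρ < ε := by simp only [hρ]; linarith [min_le_right δ ε]
      rcases hmono with hm | hm
      · have htpIcc : t + ρ ∈ Set.Icc (t - δ) (t + δ) := ⟨by linarith, by linarith⟩
        have htpball : t + ρ ∈ Metric.ball t ε := by
          rw [Metric.mem_ball, Real.dist_eq, abs_of_pos (by linarith : (0:ℝ) < t + ρ - t)]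
          linarith
        have h4 := hball ⟨htpball, hsub htpIcc⟩
        have h5 := hm hmem1 htpIcc (by linarith)
        exact absurd h4 (not_le.mpr h5)
      · have htmIcc : t - ρ ∈ Set.Icc (t - δ) (t + δ) := ⟨by linarith, by linarith⟩
        have htmball : t - ρ ∈ Metric.ball t ε := by
          rw [Metric.mem_ball, Real.dist_eq, abs_of_neg (by linarith : t - ρ - t < 0)]
          linarith
        have h4 := hball ⟨htmball, hsub htmIcc⟩
        have h5 := hm htmIcc hmem1 (by linarith)
        exact absurd h4 (not_le.mpr h5)
    · have h3 : {x | stg f 0 t n ≤ stg f 0 x n} ∈ nhdsWithin t (Set.Icc (-1:ℝ) 1) := hmin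
      rw [Metric.mem_nhdsWithin_iff] at h3
      obtain ⟨ε, hε, hball⟩ := h3
      have hminpos : 0 < min δ ε := lt_min hδ hε
      set ρ := min δ ε / 2 with hρ
      have hρpos : 0 < ρ := by simp only [hρ]; linarith
      have hρδ : ρ ≤ δ := by simp only [hρ]; linarith [min_le_left δ ε]
      have hρε : ρ < ε := by simp only [hρ]; linarith [min_le_right δ ε]
      rcases hmono with hm | hm
      · have htmIcc : t - ρ ∈ Set.Icc (t - δ) (t + δ) := ⟨by linarith, by linarith⟩
        have htmball : t - ρ ∈ Metric.ball t ε := by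
          rw [Metric.mem_ball, Real.dist_eq, abs_of_neg (by linarith : t - ρ - t < 0)]
          linarith
        have h4 := hball ⟨htmball, hsub htmIcc⟩
        have h5 := hm htmIcc hmem1 (by linarith)
        exact absurd h4 (not_le.mpr h5)
      · have htpIcc : t + ρ ∈ Set.Icc (t - δ) (t + δ) := ⟨by linarith, by linarith⟩
        have htpball : t + ρ ∈ Metric.ball t ε := by
          rw [Metric.mem_ball, Real.dist_eq, abs_of_pos (by linarith : (0:ℝ) < t + ρ - t)]
          linarith
        have h4 := hball ⟨htpball, hsub htpIcc⟩
        have h5 := hm hmem1 htpIcc (by linarith)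
        exact absurd h4 (not_le.mpr h5)
  obtain ⟨k, hk, hkc⟩ := hkey
  refine ⟨k, hk, ?_⟩
  show stg f k (cf k) (n - k) = v
  rw [← htv]
  show stg f k (cf k) (n - k) = stg f 0 t n
  have e1 : stg f 0 t n = stg f k (stg f 0 t k) (n - k) := by
    have e2 : n = k + (n - k) := by omega
    calc stg f 0 t n = stg f 0 t (k + (n - k)) := by rw [← e2]
    _ = stg f (0 + k) (stg f 0 t k) (n - k) := stg_add f 0 k t (n - k)
    _ = stg f k (stg f 0 t k) (n - k) := by rw [Nat.zero_add]
  rw [e1, hkc]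


section FinTrans

variable {n : ℕ} [NeZero n]

lemma cyc_eq_stg (f : Fin n → ℝ → ℝ) (x : ℝ) :
    ∀ i, cycOrbit f x i = stg (fun k => f (k : Fin n)) 0 x i := by
  intro i
  induction i with
  | zero => rfl
  | succ i ihi =>
    show f (i : Fin n) (cycOrbit f x i) = _
    rw [stg_succ, Nat.zero_add, ihi]

lemma cyc_shift (f : Fin n → ℝ → ℝ) (x : ℝ) :
    ∀ i, cycOrbit f x (n + i) = cycOrbit f (cycOrbit f x n) i := by
  intro i
  induction i with
  | zero => rfl
  | succ i ihi =>
    show f ((n + i : ℕ) : Fin n) (cycOrbit f x (n + i)) = f (i : Fin n) _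
    rw [ihi]
    congr 1
    rw [Nat.cast_add, Fin.natCast_self, zero_add]

lemma itin_shift (f : Fin n → ℝ → ℝ) (c : Fin n → ℝ) (x : ℝ) (i : ℕ) :
    itin f c x (n + i) = itin f c (cycOrbit f x n) i := by
  unfold itin
  rw [cyc_shift f x i, Nat.cast_add, Fin.natCast_self, zero_add]

end FinTrans

set_option maxHeartbeats 1000000 in
theorem main_helper {n : ℕ} [NeZero n]
    (f g : Fin n → ℝ → ℝ) (cf cg : Fin n → ℝ)
    (hf : ∀ i, IsUnimodal (f i) (cf i)) (hg : ∀ i, IsUnimodal (g i) (cg i))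
    (hfcv : ∀ i : Fin n, cf (((i : ℕ) + 1 : ℕ) : Fin n) ≤ f i (cf i))
    (hgcv : ∀ i : Fin n, cg (((i : ℕ) + 1 : ℕ) : Fin n) ≤ g i (cg i))
    (hsame : ∀ x ∈ Set.Icc (-1 : ℝ) 1, cycOrbit f x n = cycOrbit g x n)
    (hnval : (critValues fun x => cycOrbit f x n).ncard = n) :
    ∀ x ∈ Set.Icc (-1 : ℝ) 1, ∀ i : ℕ, itin f cf x i = itin g cg x i := by
  have hn : 0 < n := Nat.pos_of_ne_zero (NeZero.ne n)
  set fN : ℕ → ℝ → ℝ := fun k => f (k : Fin n) with hfN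
  set gN : ℕ → ℝ → ℝ := fun k => g (k : Fin n) with hgN
  set cfN : ℕ → ℝ := fun k => cf (k : Fin n) with hcfN
  set cgN : ℕ → ℝ := fun k => cg (k : Fin n) with hcgN
  have hUf : ∀ i < n, Uni (fN i) (cfN i) := fun i _ => (hf _).uni
  have hUg : ∀ i < n, Uni (gN i) (cgN i) := fun i _ => (hg _).uni
  have hcontf : ∀ i, i + 1 < n → ContinuousOn (fN i) (Set.Icc (-1:ℝ) 1) :=
    fun i _ => (hf _).cont
  have hcontg : ∀ i, i + 1 < n → ContinuousOn (gN i) (Set.Icc (-1:ℝ) 1) :=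
    fun i _ => (hg _).cont
  have hchainf : ∀ i, i + 1 < n → cfN (i+1) ≤ fN i (cfN i) := by
    intro i hi
    have h1 := hfcv (i : Fin n)
    have hv : ((i : Fin n) : ℕ) = i := Fin.val_cast_of_lt (by omega)
    rw [hv] at h1
    exact h1
  have hchaing : ∀ i, i + 1 < n → cgN (i+1) ≤ gN i (cgN i) := by
    intro i hi
    have h1 := hgcv (i : Fin n)
    have hv : ((i : Fin n) : ℕ) = i := Fin.val_cast_of_lt (by omega)
    rw [hv] at h1
    exact h1
  have hsameN : ∀ x ∈ Set.Icc (-1:ℝ) 1, stg fN 0 x n = stg gN 0 x n := by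
    intro x hx
    rw [← cyc_eq_stg, ← cyc_eq_stg]
    exact hsame x hx
  -- injectivity of the critical value maps
  have hIio : (Set.Iio n).Finite := Set.finite_Iio n
  have hinj : ∀ (F : ℕ → ℝ → ℝ) (cF : ℕ → ℝ),
      critValues (fun x => cycOrbit f x n) ⊆ (fun j => stg F j (cF j) (n - j)) '' (Set.Iio n) →
      Set.InjOn (fun j => stg F j (cF j) (n - j)) (Set.Iio n) := by
    intro F cF hsubs
    have h1 : (critValues fun x => cycOrbit f x n).ncard ≤
        ((fun j => stg F j (cF j) (n - j)) '' (Set.Iio n)).ncard :=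
      Set.ncard_le_ncard hsubs (hIio.image _)
    have h2 : ((fun j => stg F j (cF j) (n - j)) '' (Set.Iio n)).ncard ≤ (Set.Iio n).ncard :=
      Set.ncard_image_le hIio
    have h3 : (Set.Iio n).ncard = n := by
      rw [← Finset.coe_range, Set.ncard_coe_finset, Finset.card_range]
    rw [hnval] at h1
    rw [h3] at h2
    apply Set.injOn_of_ncard_image_eq _ hIio
    rw [h3]
    omega
  have hcontfFull : ∀ i < n, ContinuousOn (fN i) (Set.Icc (-1:ℝ) 1) := fun i _ => (hf _).cont
  have hcontgFull : ∀ i < n, ContinuousOn (gN i) (Set.Icc (-1:ℝ) 1) := fun i _ => (hg _).cont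
  have hsubf : critValues (fun x => cycOrbit f x n) ⊆
      (fun j => stg fN j (cfN j) (n - j)) '' (Set.Iio n) := by
    have hcgr : critValues (fun x => cycOrbit f x n) = critValues (fun x => stg fN 0 x n) :=
      critValues_congr (fun x _ => cyc_eq_stg f x n)
    rw [hcgr]
    exact critSub hUf hcontfFull
  have hsubg : critValues (fun x => cycOrbit f x n) ⊆
      (fun j => stg gN j (cgN j) (n - j)) '' (Set.Iio n) := by
    have hcgr : critValues (fun x => cycOrbit f x n) = critValues (fun x => stg gN 0 x n) :=
      critValues_congr (fun x hx => by rw [hsame x hx]; exact cyc_eq_stg g x n)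
    rw [hcgr]
    exact critSub hUg hcontgFull
  have hvf : ∀ j < n, ∀ k < n,
      stg fN j (cfN j) (n - j) = stg fN k (cfN k) (n - k) → j = k := by
    intro j hj k hk he
    exact hinj fN cfN hsubf (Set.mem_Iio.mpr hj) (Set.mem_Iio.mpr hk) he
  have hvg : ∀ j < n, ∀ k < n,
      stg gN j (cgN j) (n - j) = stg gN k (cgN k) (n - k) → j = k := by
    intro j hj k hk he
    exact hinj gN cgN hsubg (Set.mem_Iio.mpr hj) (Set.mem_Iio.mpr hk) he
  have hmain := AUX n fN gN cfN cgN hUf hUg hchainf hchaing hcontf hcontg hvf hvg hsameN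
  have horbmem : ∀ x ∈ Set.Icc (-1:ℝ) 1, cycOrbit g x n ∈ Set.Icc (-1:ℝ) 1 := by
    intro x hx
    have h1 : stg gN 0 x n ∈ Set.Icc (-1:ℝ) 1 := stg_mem hUg hx n (by omega)
    rw [← cyc_eq_stg] at h1
    exact h1
  have key : ∀ i : ℕ, ∀ x ∈ Set.Icc (-1:ℝ) 1, itin f cf x i = itin g cg x i := by
    intro i
    induction i using Nat.strong_induction_on with
    | _ i ih =>
      intro x hx
      rcases Nat.lt_or_ge i n with hin | hin
      · have hres := hmain x hx i hin
        simp only [hfN, hgN, hcfN, hcgN] at hres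
        have e1 := cyc_eq_stg f x i
        have e2 := cyc_eq_stg g x i
        unfold itin
        rw [e1, e2]
        rcases lt_trichotomy (stg (fun k => f (k : Fin n)) 0 x i) (cf (i : Fin n)) with h | h | h
        · rw [if_pos h, if_pos (hres.1.mp h)]
        · rw [if_neg (by rw [h]; exact lt_irrefl _), if_pos h,
            if_neg (by rw [hres.2.mp h]; exact lt_irrefl _), if_pos (hres.2.mp h)]
        · have hg1 : ¬ stg (fun k => g (k : Fin n)) 0 x i < cg (i : Fin n) := by
            intro hc
            have := hres.1.mpr hc
            linarith
          have hg2 : ¬ stg (fun k => g (k : Fin n)) 0 x i = cg (i : Fin n) := by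
            intro hc
            have := hres.2.mpr hc
            linarith
          rw [if_neg (not_lt.mpr (le_of_lt h)), if_neg (ne_of_gt h), if_neg hg1, if_neg hg2]
      · have e : i = n + (i - n) := by omega
        rw [e, itin_shift f cf x (i - n), itin_shift g cg x (i - n), hsame x hx]
        exact ih (i - n) (by omega) (cycOrbit g x n) (horbmem x hx)
  intro x hx i
  exact key i x hx


end ItinAux

/-- **Decomposition independence of itineraries.**  Let `f = fₙ ∘ ⋯ ∘ f₁ = gₙ ∘ ⋯ ∘ g₁`
be two decompositions of the same multimodal map of type `n` (each `f_i`, `g_i`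
unimodal, with `f_i(c_i) ≥ c_{(i mod n)+1}` and likewise for `g`).  If the map has
exactly `n` critical values, then the itinerary of every `x ∈ [-1,1]` computed from
the decomposition `(f₁, …, fₙ)` coincides letter by letter with the one computed from
`(g₁, …, gₙ)`. -/
theorem itinerary_decomposition_independent {n : ℕ} [NeZero n]
    (f g : Fin n → ℝ → ℝ) (cf cg : Fin n → ℝ)
    (hf : ∀ i, IsUnimodal (f i) (cf i)) (hg : ∀ i, IsUnimodal (g i) (cg i))
    (hfcv : ∀ i : Fin n, cf (((i : ℕ) + 1 : ℕ) : Fin n) ≤ f i (cf i))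
    (hgcv : ∀ i : Fin n, cg (((i : ℕ) + 1 : ℕ) : Fin n) ≤ g i (cg i))
    (hsame : ∀ x ∈ Set.Icc (-1 : ℝ) 1, cycOrbit f x n = cycOrbit g x n)
    (hnval : (critValues fun x => cycOrbit f x n).ncard = n) :
    ∀ x ∈ Set.Icc (-1 : ℝ) 1, ∀ i : ℕ, itin f cf x i = itin g cg x i :=
  ItinAux.main_helper f g cf cg hf hg hfcv hgcv hsame hnval
end
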